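/- arXiv:1605.05196 — 6 statements merged into one kernel-verified Lean document; each statement's English description precedes it below -/
import Mathlib

section
/- Let b ∈ ℝ^d and let μ be a finite positive Borel measure on ℝ^d with compact support and μ({b}) = 0. Let 0 < s < d and ε > 0, and set E = {a ∈ ℝ^d : |a-b|^s · ∫ |x-a|^{-s} dμ(x) ≥ ε}. Then E has Lebesgue density zero at b. -/
/-!
Split the potential at a scale `δ`. For `a ∈ B(b, r)` with `r ≤ δ / 2`, the mass of `μ` outside
`B(b, δ)` contributes at most `(δ / 2)⁻ˢ μ(ℝᵈ)` to the potential, and `|a - b|ˢ ≤ rˢ` makes this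
smaller than `ε / 2` for small `r`. On `E ∩ B(b, r)` the potential of `μ` restricted to `B(b, δ)` is
therefore at least `ε / (2 rˢ)`. By scaling, `∫_{B(b, r)} |x - a|⁻ˢ da ≤ C r^(d - s)` uniformly in
`x`, with `C < ∞` because `s < d`; Tonelli and Chebyshev then give
`|E ∩ B(b, r)| ≤ (2 / ε) C μ(B(b, δ)) rᵈ`, and `μ(B(b, δ)) → 0` as `δ → 0` since `μ {b} = 0`.
-/

open MeasureTheory Metric Filter ENNReal

def DensityZeroAt (d : ℕ) (E : Set (EuclideanSpace ℝ (Fin d)))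
    (b : EuclideanSpace ℝ (Fin d)) : Prop :=
  Tendsto (fun r : ℝ => volume (E ∩ closedBall b r) / ENNReal.ofReal (r ^ d))
    (nhdsWithin 0 (Set.Ioi 0)) (nhds 0)

open Module

theorem ENNReal.rpow_neg_le_rpow_neg {x y : ℝ≥0∞} {s : ℝ} (hs : 0 ≤ s) (hxy : x ≤ y) :
    y ^ (-s) ≤ x ^ (-s) := by
  rw [ENNReal.rpow_neg, ENNReal.rpow_neg]
  exact ENNReal.inv_le_inv.2 (ENNReal.rpow_le_rpow hxy hs)

theorem ENNReal.ofReal_rpow_add_of_pos {r : ℝ} (hr : 0 < r) (y z : ℝ) :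
    ENNReal.ofReal r ^ (y + z) = ENNReal.ofReal r ^ y * ENNReal.ofReal r ^ z :=
  ENNReal.rpow_add y z (by simpa using hr) ofReal_ne_top

theorem ENNReal.tendsto_ofReal_rpow_mul_nhdsGT_zero {s : ℝ} (hs : 0 < s) {c : ℝ≥0∞}
    (hc : c ≠ ∞) :
    Tendsto (fun r => ENNReal.ofReal r ^ s * c) (nhdsWithin 0 (Set.Ioi 0)) (nhds 0) := by
  have h : Tendsto (fun r : ℝ => ENNReal.ofReal r ^ s) (nhds 0) (nhds (ENNReal.ofReal 0 ^ s)) :=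
    ((ENNReal.continuous_rpow_const (y := s)).comp ENNReal.continuous_ofReal).tendsto 0
  rw [ENNReal.ofReal_zero, ENNReal.zero_rpow_of_pos hs] at h
  simpa using ENNReal.Tendsto.mul_const (h.mono_left nhdsWithin_le_nhds) (Or.inr hc)

theorem tendsto_measure_closedBall_nhdsGT_zero {X : Type*} [MetricSpace X] [MeasurableSpace X]
    [OpensMeasurableSpace X] (ν : Measure X) [IsFiniteMeasure ν] {b : X} (hb : ν {b} = 0) :
    Tendsto (fun δ => ν (closedBall b δ)) (nhdsWithin 0 (Set.Ioi 0)) (nhds 0) := by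
  have := tendsto_measure_biInter_gt (μ := ν) (s := closedBall b) (a := 0)
    (fun _ _ => measurableSet_closedBall.nullMeasurableSet)
    (fun _ _ _ hij => closedBall_subset_closedBall hij) ⟨1, one_pos, measure_ne_top ν _⟩
  rwa [biInter_gt_closedBall, closedBall_zero, hb] at this

section HaarMeasure

variable {E : Type*} [NormedAddCommGroup E] [NormedSpace ℝ E] [FiniteDimensional ℝ E]
  [MeasurableSpace E] [BorelSpace E] (μ : Measure E) [μ.IsAddHaarMeasure]

theorem setLIntegral_closedBall_zero_eq_smul {ρ : ℝ} (hρ : 0 < ρ) {f : E → ℝ≥0∞}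
    (hf : Measurable f) :
    ∫⁻ y in closedBall 0 ρ, f y ∂μ =
      ENNReal.ofReal (ρ ^ finrank ℝ E) * ∫⁻ y in closedBall 0 1, f (ρ • y) ∂μ := by
  have hpre : (ρ • ·) ⁻¹' closedBall (0 : E) ρ = closedBall 0 1 := by
    ext y
    simp [norm_smul, abs_of_pos hρ, hρ]
  have hmap := setLIntegral_map (μ := μ) (measurableSet_closedBall (x := (0 : E)) (ε := ρ)) hf
    (measurable_const_smul ρ)
  rw [Measure.map_addHaar_smul μ hρ.ne', Measure.restrict_smul, lintegral_smul_measure, hpre,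
    abs_of_pos (by positivity), smul_eq_mul] at hmap
  rw [← hmap, ← mul_assoc, ← ENNReal.ofReal_mul (by positivity),
    mul_inv_cancel₀ (by positivity), ENNReal.ofReal_one, one_mul]

theorem setLIntegral_closedBall_dist_rpow_neg_eq (s : ℝ) (x : E) {ρ : ℝ} (hρ : 0 < ρ) :
    ∫⁻ a in closedBall x ρ, ENNReal.ofReal (dist x a) ^ (-s) ∂μ =
      ENNReal.ofReal ρ ^ ((finrank ℝ E : ℝ) - s) *
        ∫⁻ y in closedBall 0 1, ENNReal.ofReal ‖y‖ ^ (-s) ∂μ := by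
  have hk : Measurable fun y : E => ENNReal.ofReal ‖y‖ ^ (-s) := by fun_prop
  have hpre : (· + x) ⁻¹' closedBall x ρ = closedBall 0 ρ := by
    ext y
    simp [dist_eq_norm]
  have htrans := (measurePreserving_add_right μ x).setLIntegral_comp_preimage_emb
    (measurableEmbedding_addRight x) (fun a => ENNReal.ofReal (dist a x) ^ (-s)) (closedBall x ρ)
  simp only [hpre, dist_add_self_left] at htrans
  simp_rw [dist_comm x]
  rw [← htrans, setLIntegral_closedBall_zero_eq_smul μ hρ hk]
  simp_rw [norm_smul, Real.norm_of_nonneg hρ.le, ENNReal.ofReal_mul hρ.le,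
    ENNReal.mul_rpow_of_ne_top ofReal_ne_top ofReal_ne_top]
  rw [lintegral_const_mul _ hk, ← mul_assoc, ENNReal.ofReal_pow hρ.le, ← ENNReal.rpow_natCast,
    ← ENNReal.ofReal_rpow_add_of_pos hρ, sub_eq_add_neg]

theorem setLIntegral_closedBall_norm_rpow_neg_ne_top {s : ℝ} (hs0 : 0 ≤ s)
    (hs : s < finrank ℝ E) :
    ∫⁻ y in closedBall 0 1, ENNReal.ofReal ‖y‖ ^ (-s) ∂μ ≠ ∞ := by
  have hd : 0 < finrank ℝ E := by exact_mod_cast hs0.trans_lt hs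
  have : Nontrivial E := Module.nontrivial_of_finrank_pos hd
  have hint : IntegrableOn (fun y : E => ‖y‖ ^ (-s)) (ball 0 2) μ :=
    integrableOn_ball_of_norm_le_rpow hd hs (C := 1)
      (ae_of_all _ fun y => by simp [Real.norm_of_nonneg (Real.rpow_nonneg (norm_nonneg y) _)])
      (continuous_norm.measurable.pow_const _).aestronglyMeasurable
  have hfin := ((hint.mono_set (closedBall_subset_ball one_lt_two)).hasFiniteIntegral).ne
  refine ne_of_eq_of_ne (setLIntegral_congr_fun_ae measurableSet_closedBall ?_) hfin
  -- At `y = 0` the extended power is `∞` while the real one is `0`; `μ {0} = 0`.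
  filter_upwards [Measure.ae_ne μ 0] with y hy _
  rw [Real.enorm_of_nonneg (Real.rpow_nonneg (norm_nonneg y) _),
    ENNReal.ofReal_rpow_of_pos (norm_pos_iff.2 hy)]

theorem exists_setLIntegral_closedBall_dist_rpow_neg_le {s : ℝ} (hs0 : 0 ≤ s)
    (hs : s < finrank ℝ E) :
    ∃ C : ℝ≥0∞, C ≠ ∞ ∧ ∀ (x b : E) {r : ℝ}, 0 < r →
      ∫⁻ a in closedBall b r, ENNReal.ofReal (dist x a) ^ (-s) ∂μ ≤
        C * ENNReal.ofReal r ^ ((finrank ℝ E : ℝ) - s) := by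
  set I := ∫⁻ y in closedBall 0 1, ENNReal.ofReal ‖y‖ ^ (-s) ∂μ
  have hds : 0 ≤ (finrank ℝ E : ℝ) - s := by linarith
  refine ⟨ENNReal.ofReal 3 ^ ((finrank ℝ E : ℝ) - s) * I + μ (closedBall 0 1),
    add_ne_top.2 ⟨mul_ne_top (rpow_ne_top_of_nonneg hds ofReal_ne_top)
      (setLIntegral_closedBall_norm_rpow_neg_ne_top μ hs0 hs), measure_closedBall_lt_top.ne⟩,
    fun x b r hr => ?_⟩
  -- Either `B(b, r) ⊆ B(x, 3r)`, or the kernel is at most `r⁻ˢ` on `B(b, r)`.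
  rcases le_or_gt (dist x b) (2 * r) with hnear | hfar
  · calc ∫⁻ a in closedBall b r, ENNReal.ofReal (dist x a) ^ (-s) ∂μ
        ≤ ∫⁻ a in closedBall x (3 * r), ENNReal.ofReal (dist x a) ^ (-s) ∂μ :=
          lintegral_mono_set (closedBall_subset_closedBall' (by rw [dist_comm]; linarith))
      _ = ENNReal.ofReal 3 ^ ((finrank ℝ E : ℝ) - s) * I *
            ENNReal.ofReal r ^ ((finrank ℝ E : ℝ) - s) := by
          rw [setLIntegral_closedBall_dist_rpow_neg_eq μ s x (by positivity),
            ENNReal.ofReal_mul (by norm_num), ENNReal.mul_rpow_of_nonneg _ _ hds]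
          ring
      _ ≤ _ := by gcongr; exact le_self_add
  · have hkernel : ∀ a ∈ closedBall b r,
        ENNReal.ofReal (dist x a) ^ (-s) ≤ ENNReal.ofReal r ^ (-s) :=
      fun a ha => ENNReal.rpow_neg_le_rpow_neg hs0 <| ENNReal.ofReal_le_ofReal <| by
        linarith [dist_triangle x a b, mem_closedBall.1 ha]
    calc ∫⁻ a in closedBall b r, ENNReal.ofReal (dist x a) ^ (-s) ∂μ
        ≤ ∫⁻ _ in closedBall b r, ENNReal.ofReal r ^ (-s) ∂μ :=
          setLIntegral_mono measurable_const hkernel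
      _ = μ (closedBall 0 1) * ENNReal.ofReal r ^ ((finrank ℝ E : ℝ) - s) := by
          rw [setLIntegral_const, Measure.addHaar_closedBall' μ b hr.le, ENNReal.ofReal_pow hr.le,
            ← ENNReal.rpow_natCast, sub_eq_neg_add, ENNReal.ofReal_rpow_add_of_pos hr]
          ring
      _ ≤ _ := by gcongr; exact le_add_self

end HaarMeasure

noncomputable def rieszPotential {X : Type*} [PseudoMetricSpace X] [MeasurableSpace X] (s : ℝ)
    (ν : Measure X) (a : X) : ℝ≥0∞ :=
  ∫⁻ x, ENNReal.ofReal (dist x a) ^ (-s) ∂ν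

section RieszPotential

variable {X : Type*} [PseudoMetricSpace X] [MeasurableSpace X] {s : ℝ} {ν : Measure X}

theorem rieszPotential_restrict_compl_closedBall_le (hs : 0 ≤ s) {a b : X} {δ : ℝ}
    (ha : dist a b ≤ δ / 2) :
    rieszPotential s (ν.restrict (closedBall b δ)ᶜ) a ≤
      ENNReal.ofReal (δ / 2) ^ (-s) * ν Set.univ := by
  calc ∫⁻ x in (closedBall b δ)ᶜ, ENNReal.ofReal (dist x a) ^ (-s) ∂ν
      ≤ ∫⁻ _ in (closedBall b δ)ᶜ, ENNReal.ofReal (δ / 2) ^ (-s) ∂ν := by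
        refine setLIntegral_mono measurable_const fun x hx => ENNReal.rpow_neg_le_rpow_neg hs ?_
        have := not_le.1 (mt mem_closedBall.2 hx)
        exact ENNReal.ofReal_le_ofReal (by linarith [dist_triangle x a b])
    _ ≤ ENNReal.ofReal (δ / 2) ^ (-s) * ν Set.univ := by
        rw [setLIntegral_const]
        gcongr
        exact Set.subset_univ _

variable [OpensMeasurableSpace X]

theorem superlevel_inter_closedBall_subset (hs : 0 ≤ s) {ε : ℝ≥0∞} (hε : ε ≠ ∞) {b : X}
    {δ r : ℝ} (hrδ : r ≤ δ / 2)
    (hfar : ENNReal.ofReal r ^ s * (ENNReal.ofReal (δ / 2) ^ (-s) * ν Set.univ) ≤ ε / 2) :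
    {a | ε ≤ ENNReal.ofReal (dist a b) ^ s * rieszPotential s ν a} ∩ closedBall b r ⊆
      {a | ε / 2 ≤ ENNReal.ofReal r ^ s * rieszPotential s (ν.restrict (closedBall b δ)) a} := by
  rintro a ⟨ha, har⟩
  have hsplit : rieszPotential s ν a = rieszPotential s (ν.restrict (closedBall b δ)) a +
      rieszPotential s (ν.restrict (closedBall b δ)ᶜ) a :=
    (lintegral_add_compl _ measurableSet_closedBall).symm
  have hfar_a : ENNReal.ofReal r ^ s * rieszPotential s (ν.restrict (closedBall b δ)ᶜ) a ≤ ε / 2 :=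
    (mul_le_mul' le_rfl (rieszPotential_restrict_compl_closedBall_le hs
      ((mem_closedBall.1 har).trans hrδ))).trans hfar
  refine (ENNReal.add_le_add_iff_right (ENNReal.div_ne_top hε two_ne_zero)).1 ?_
  calc ε / 2 + ε / 2 = ε := ENNReal.add_halves ε
    _ ≤ ENNReal.ofReal (dist a b) ^ s * rieszPotential s ν a := ha
    _ ≤ ENNReal.ofReal r ^ s * rieszPotential s ν a := by
        gcongr
        exact mem_closedBall.1 har
    _ ≤ _ := by rw [hsplit, mul_add]; gcongr

variable [SecondCountableTopology X] [SFinite ν]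

theorem measurable_rieszPotential (s : ℝ) : Measurable (rieszPotential s ν) :=
  Measurable.lintegral_prod_left (by fun_prop)

theorem setLIntegral_rieszPotential_le {μ : Measure X} [SFinite μ] {S : Set X} {M : ℝ≥0∞}
    (hM : ∀ x, ∫⁻ a in S, ENNReal.ofReal (dist x a) ^ (-s) ∂μ ≤ M) :
    ∫⁻ a in S, rieszPotential s ν a ∂μ ≤ ν Set.univ * M := by
  unfold rieszPotential
  rw [lintegral_lintegral_swap (by fun_prop)]
  calc ∫⁻ x, ∫⁻ a in S, ENNReal.ofReal (dist x a) ^ (-s) ∂μ ∂ν ≤ ∫⁻ _, M ∂ν := lintegral_mono hM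
    _ = ν Set.univ * M := by rw [lintegral_const, mul_comm]

theorem measure_superlevel_inter_closedBall_le (μ : Measure X) [SFinite μ] (hs : 0 ≤ s)
    {ε : ℝ≥0∞} (hε : ε ≠ ∞) {b : X} {δ r : ℝ} (hr : 0 < r) (hrδ : r ≤ δ / 2)
    (hfar : ENNReal.ofReal r ^ s * (ENNReal.ofReal (δ / 2) ^ (-s) * ν Set.univ) ≤ ε / 2)
    {C : ℝ≥0∞} {D : ℝ}
    (hC : ∀ x, ∫⁻ a in closedBall b r, ENNReal.ofReal (dist x a) ^ (-s) ∂μ ≤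
      C * ENNReal.ofReal r ^ (D - s)) :
    ε / 2 * μ ({a | ε ≤ ENNReal.ofReal (dist a b) ^ s * rieszPotential s ν a} ∩ closedBall b r) ≤
      C * ν (closedBall b δ) * ENNReal.ofReal r ^ D := by
  set νδ := ν.restrict (closedBall b δ)
  have hrD : ENNReal.ofReal r ^ s * ENNReal.ofReal r ^ (D - s) = ENNReal.ofReal r ^ D := by
    rw [← ENNReal.ofReal_rpow_add_of_pos hr, add_sub_cancel]
  calc ε / 2 * μ ({a | ε ≤ ENNReal.ofReal (dist a b) ^ s * rieszPotential s ν a} ∩ closedBall b r)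
      ≤ ε / 2 * μ.restrict (closedBall b r)
          {a | ε / 2 ≤ ENNReal.ofReal r ^ s * rieszPotential s νδ a} := by
        rw [Measure.restrict_apply' measurableSet_closedBall]
        refine mul_le_mul' le_rfl (measure_mono ?_)
        exact Set.subset_inter (superlevel_inter_closedBall_subset hs hε hrδ hfar)
          Set.inter_subset_right
    _ ≤ ∫⁻ a in closedBall b r, ENNReal.ofReal r ^ s * rieszPotential s νδ a ∂μ :=
        mul_meas_ge_le_lintegral₀ ((measurable_rieszPotential s).const_mul _).aemeasurable _
    _ ≤ ENNReal.ofReal r ^ s * (νδ Set.univ * (C * ENNReal.ofReal r ^ (D - s))) := by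
        rw [lintegral_const_mul _ (measurable_rieszPotential s)]
        gcongr
        exact setLIntegral_rieszPotential_le hC
    _ = C * ν (closedBall b δ) * ENNReal.ofReal r ^ D := by
        rw [Measure.restrict_apply_univ, ← hrD]
        ring

end RieszPotential

theorem riesz_potential_density_zero_general (d : ℕ) (b : EuclideanSpace ℝ (Fin d))
    (μ : Measure (EuclideanSpace ℝ (Fin d))) [IsFiniteMeasure μ]
    (hb : μ {b} = 0)
    (s : ℝ) (hs0 : 0 < s) (hsd : s < d) (ε : ℝ) (hε : 0 < ε) :
    DensityZeroAt d
      {a | ENNReal.ofReal ε ≤ (ENNReal.ofReal (dist a b)) ^ s *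
        ∫⁻ x, (ENNReal.ofReal (dist x a)) ^ (-s) ∂μ} b := by
  obtain ⟨C, hC, hCball⟩ := exists_setLIntegral_closedBall_dist_rpow_neg_le
    (volume : Measure (EuclideanSpace ℝ (Fin d))) hs0.le (by rwa [finrank_euclideanSpace_fin])
  rw [finrank_euclideanSpace_fin] at hCball
  rw [DensityZeroAt, ENNReal.tendsto_nhds_zero]
  intro η hη
  set ε' := ENNReal.ofReal ε / 2
  have hε'0 : ε' ≠ 0 := by simp [ε', hε]
  have hε'top : ε' ≠ ∞ := ENNReal.div_ne_top ofReal_ne_top two_ne_zero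
  obtain ⟨δ, hνδ, hδ⟩ : ∃ δ, C * μ (closedBall b δ) < η * ε' ∧ 0 < δ := by
    have := ENNReal.Tendsto.const_mul (tendsto_measure_closedBall_nhdsGT_zero μ hb) (Or.inr hC)
    rw [mul_zero] at this
    exact ((this.eventually_lt_const (ENNReal.mul_pos hη.ne' hε'0)).and self_mem_nhdsWithin).exists
  have hfar := ENNReal.tendsto_ofReal_rpow_mul_nhdsGT_zero hs0
    (c := ENNReal.ofReal (δ / 2) ^ (-s) * μ Set.univ) (mul_ne_top
      (rpow_ne_top_of_ne_zero (by simpa using hδ) ofReal_ne_top) (measure_ne_top μ Set.univ))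
  filter_upwards [hfar.eventually_le_const (pos_iff_ne_zero.2 hε'0), self_mem_nhdsWithin,
    Ioc_mem_nhdsGT (half_pos hδ)] with r hr_far hr hrδ
  have key := measure_superlevel_inter_closedBall_le volume hs0.le ofReal_ne_top hr hrδ.2 hr_far
    (fun x => hCball x b hr)
  refine ENNReal.div_le_of_le_mul ?_
  rw [ENNReal.ofReal_pow (le_of_lt hr), ← ENNReal.rpow_natCast]
  refine (ENNReal.mul_le_mul_iff_right hε'0 hε'top).1 (key.trans ?_)
  calc C * μ (closedBall b δ) * ENNReal.ofReal r ^ (d : ℝ)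
      ≤ η * ε' * ENNReal.ofReal r ^ (d : ℝ) := by gcongr
    _ = ε' * (η * ENNReal.ofReal r ^ (d : ℝ)) := by ring

/-- if μ is a finite positive measure with compact support and no
mass at b, 0 < s < d, ε > 0, then
E = {a : |a-b|^s ∫ |x-a|^{-s} dμ(x) ≥ ε} has Lebesgue density zero at b. -/
theorem riesz_potential_density_zero (d : ℕ) (b : EuclideanSpace ℝ (Fin d))
    (μ : Measure (EuclideanSpace ℝ (Fin d))) [IsFiniteMeasure μ]
    (hK : ∃ K, IsCompact K ∧ μ Kᶜ = 0) (hb : μ {b} = 0)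
    (s : ℝ) (hs0 : 0 < s) (hsd : s < d) (ε : ℝ) (hε : 0 < ε) :
    DensityZeroAt d
      {a | ENNReal.ofReal ε ≤ (ENNReal.ofReal (dist a b)) ^ s *
        ∫⁻ x, (ENNReal.ofReal (dist x a)) ^ (-s) ∂μ} b :=
  riesz_potential_density_zero_general d b μ hb s hs0 hsd ε hε
end

section
/- Let b ∈ ℝ^d and let μ be a finite positive Borel measure on ℝ^d × ℝ^d with compact support, assigning no mass to {b} × ℝ^d or to ℝ^d × {b}. Let s, t > 0 with s + t < d, and ε > 0. Then the set E = {a ∈ ℝ^d : |a-b|^{s+t} · ∫∫ dμ(x,y)/(|x-a|^s |y-a|^t) ≥ ε} satisfies ∑_{n=1}^∞ 2^{(s+t)n} C_{s+t}(A_n(b) ∩ E) < ∞; in particular E has Lebesgue density zero at b. -/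
open MeasureTheory Metric Filter ENNReal

noncomputable def rieszCap (d : ℕ) (s : ℝ) (E : Set (EuclideanSpace ℝ (Fin d))) : ℝ≥0∞ :=
  ⨆ (μ : Measure (EuclideanSpace ℝ (Fin d)))
    (_ : ∃ K, IsCompact K ∧ K ⊆ E ∧ μ Kᶜ = 0)
    (_ : ∀ a, ∫⁻ x, (ENNReal.ofReal (dist x a)) ^ (-s) ∂μ ≤ 1),
    μ Set.univ

/-- The dyadic annulus `A_n(b)`. -/
def annulus (d : ℕ) (b : EuclideanSpace ℝ (Fin d)) (n : ℕ) :
    Set (EuclideanSpace ℝ (Fin d)) :=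
  {x | ((1 : ℝ) / 2) ^ (n + 1) ≤ dist x b ∧ dist x b ≤ ((1 : ℝ) / 2) ^ n}

/-!
For a test measure `ν` of the capacity of `A_{n+1}(b) ∩ E` (concentrated at distance
`≈ r = 2^{-(n+1)}` from `b`, with `(s+t)`-potential at most `1`), integrating the inequality
defining `E` against `ν` and using Tonelli gives `ε ν(ℝᵈ) ≤ r^{s+t} ∫ G dμ`, where
`G(x, y) = ∫ |x-a|^{-s} |y-a|^{-t} dν(a)`. The potential bound gives `G ≤ 2`; together with the
mass bound `ν(ℝᵈ) ≤ r^{s+t}` it gives `G ≤ 2 (2r/|x-b|)^s` when `|x-b| ≥ 2r` (and symmetrically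
in `y`); and `G ≤ (r/4)^{-(s+t)} ν(ℝᵈ)` when `x` and `y` are both within `r/4` of `b`. This last
term is absorbed into the left side once `n` is so large that `μ` gives little mass to
`B(b, r/4) × ℝᵈ`, while the other bounds, summed over `n`, stay bounded off the two axes
`{b} × ℝᵈ` and `ℝᵈ × {b}`. Hence `ν(ℝᵈ) ≤ r^{s+t} c_n` with `∑ c_n < ∞`, which is the capacity
estimate. Normalized Lebesgue measure on `A_{n+1}(b) ∩ E` has potential `≲ r^{d-(s+t)}`, so the
same bound gives `|A_{n+1}(b) ∩ E| ≲ r^d c_n`, and summing over the annuli inside `B(b, r)`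
gives density zero.
-/

open Topology

namespace DoubleLayerWiener

theorem rpow_neg_le_rpow_neg {x y : ℝ≥0∞} (h : x ≤ y) {e : ℝ} (he : 0 ≤ e) :
    y ^ (-e) ≤ x ^ (-e) := by
  rw [ENNReal.rpow_neg, ENNReal.rpow_neg]
  exact ENNReal.inv_le_inv.mpr (ENNReal.rpow_le_rpow h he)

theorem rpow_neg_mul_rpow_neg (w : ℝ≥0∞) {s t : ℝ} (hs : 0 ≤ s) (ht : 0 ≤ t) :
    w ^ (-s) * w ^ (-t) = w ^ (-(s + t)) := by
  simp only [ENNReal.rpow_neg, ← ENNReal.inv_rpow]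
  exact (ENNReal.rpow_add_of_nonneg s t hs ht).symm

theorem mul_rpow_neg_le_add {s t : ℝ} (hs : 0 ≤ s) (ht : 0 ≤ t) (x y : ℝ≥0∞) :
    x ^ (-s) * y ^ (-t) ≤ x ^ (-(s + t)) + y ^ (-(s + t)) := by
  rcases le_total x y with h | h
  · calc x ^ (-s) * y ^ (-t) ≤ x ^ (-s) * x ^ (-t) :=
          mul_le_mul' le_rfl (rpow_neg_le_rpow_neg h ht)
      _ = x ^ (-(s + t)) := rpow_neg_mul_rpow_neg x hs ht
      _ ≤ _ := le_self_add
  · calc x ^ (-s) * y ^ (-t) ≤ y ^ (-s) * y ^ (-t) :=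
          mul_le_mul' (rpow_neg_le_rpow_neg h hs) le_rfl
      _ = y ^ (-(s + t)) := rpow_neg_mul_rpow_neg y hs ht
      _ ≤ _ := le_add_self

theorem mul_le_two_mul_of_le_add_half_mul {c x A : ℝ≥0∞} (hx : c * x ≠ ⊤)
    (h : c * x ≤ A + c / 2 * x) : c * x ≤ 2 * A := by
  have halves : c / 2 * x + c / 2 * x = c * x := by
    rw [← add_mul, ENNReal.add_halves]
  have hhalf : c / 2 * x ≤ A := by
    refine ENNReal.le_of_add_le_add_right (a := c / 2 * x) ?_ (halves ▸ h)
    exact ne_top_of_le_ne_top hx (halves ▸ le_add_self)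
  calc c * x = 2 * (c / 2 * x) := by rw [← halves, two_mul]
    _ ≤ 2 * A := by gcongr

theorem ofReal_rpow_neg_mul_ofReal_pow {ρ : ℝ} (hρ : 0 < ρ) (α : ℝ) (d : ℕ) :
    ENNReal.ofReal ρ ^ (-α) * ENNReal.ofReal (ρ ^ d) = ENNReal.ofReal ρ ^ ((d : ℝ) - α) := by
  rw [ENNReal.ofReal_pow hρ.le, ← ENNReal.rpow_natCast, ← ENNReal.rpow_add _ _
    (ENNReal.ofReal_pos.mpr hρ).ne' ENNReal.ofReal_ne_top, neg_add_eq_sub]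

theorem exists_half_pow_le_iff {δ : ℝ} (hδ : 0 < δ) :
    ∃ m : ℕ, ∀ n, (1 / 2 : ℝ) ^ n ≤ δ ↔ m ≤ n := by
  have hex : ∃ m : ℕ, (1 / 2 : ℝ) ^ m ≤ δ :=
    (exists_pow_lt_of_lt_one hδ (by norm_num : (1 / 2 : ℝ) < 1)).imp fun _ h => h.le
  refine ⟨Nat.find hex, fun n => ⟨Nat.find_min' hex, fun hn => ?_⟩⟩
  exact (pow_le_pow_of_le_one (by norm_num) (by norm_num) hn).trans (Nat.find_spec hex)

/-- The outer radius of the annulus `A_{n+1}(b)`. -/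
noncomputable def dyadicRadius (n : ℕ) : ℝ := (1 / 2 : ℝ) ^ (n + 1)

theorem dyadicRadius_pos (n : ℕ) : 0 < dyadicRadius n := by
  unfold dyadicRadius; positivity

theorem two_mul_dyadicRadius (n : ℕ) : 2 * dyadicRadius n = (1 / 2 : ℝ) ^ n := by
  rw [dyadicRadius, pow_succ]; ring

theorem two_rpow_mul_dyadicRadius_rpow (n : ℕ) (α : ℝ) :
    (2 : ℝ≥0∞) ^ (α * ((n : ℝ) + 1)) * ENNReal.ofReal (dyadicRadius n) ^ α = 1 := by
  have h : ENNReal.ofReal (dyadicRadius n) = 2⁻¹ ^ (n + 1) := by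
    rw [dyadicRadius, ENNReal.ofReal_pow (by norm_num), one_div, ENNReal.ofReal_inv_of_pos two_pos,
      ENNReal.ofReal_ofNat]
  rw [h, ← ENNReal.rpow_natCast, ← ENNReal.rpow_mul, ENNReal.inv_rpow,
    show ((n + 1 : ℕ) : ℝ) * α = α * (n + 1) by push_cast; ring]
  exact ENNReal.mul_inv_cancel (by simp) (by simp)

theorem tendsto_dyadicRadius_div_four :
    Tendsto (fun n => dyadicRadius n / 4) atTop (𝓝[≥] 0) := by
  refine tendsto_nhdsWithin_iff.mpr
    ⟨?_, Eventually.of_forall fun n => (div_pos (dyadicRadius_pos n) four_pos).le⟩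
  simpa [dyadicRadius] using ((tendsto_pow_atTop_nhds_zero_of_lt_one (by norm_num)
    (by norm_num : (1 / 2 : ℝ) < 1)).comp (tendsto_add_atTop_nat 1)).div_const 4

/-- With `δ` the distance of one coordinate of `(x, y)` from `b`, the first term bounds `G(x, y)`
when `δ ≥ 2ρ` and the second one when `ρ/4 < δ < 2ρ`. -/
noncomputable def radialMajorant (e ρ δ : ℝ) : ℝ≥0∞ :=
  (if 2 * ρ ≤ δ then 2 * ENNReal.ofReal (2 * ρ / δ) ^ e else 0) +
    if ρ / 4 < δ ∧ δ < 2 * ρ then 2 else 0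

theorem far_le_radialMajorant {e ρ δ : ℝ} (h : 2 * ρ ≤ δ) :
    2 * ENNReal.ofReal (2 * ρ / δ) ^ e ≤ radialMajorant e ρ δ := by
  rw [radialMajorant, if_pos h]
  exact le_self_add

theorem two_le_radialMajorant {e ρ δ : ℝ} (h₁ : ρ / 4 < δ) (h₂ : δ < 2 * ρ) :
    2 ≤ radialMajorant e ρ δ := by
  rw [radialMajorant, if_pos (show ρ / 4 < δ ∧ δ < 2 * ρ from ⟨h₁, h₂⟩)]
  exact le_add_self

theorem measurable_radialMajorant (e ρ : ℝ) : Measurable (radialMajorant e ρ) := by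
  refine Measurable.add (Measurable.ite measurableSet_Ici ?_ measurable_const)
    (Measurable.ite measurableSet_Ioo measurable_const measurable_const)
  exact ((measurable_const.div measurable_id).ennreal_ofReal.pow_const e).const_mul 2

theorem tsum_far_le {e δ : ℝ} (he : 0 < e) (hδ : 0 < δ) :
    ∑' n, (if 2 * dyadicRadius n ≤ δ then 2 * ENNReal.ofReal (2 * dyadicRadius n / δ) ^ e
      else 0) ≤ 2 * (1 - ENNReal.ofReal (1 / 2) ^ e)⁻¹ := by
  obtain ⟨m, hm⟩ := exists_half_pow_le_iff hδ
  set q := ENNReal.ofReal (1 / 2) ^ e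
  have hterm : ∀ n, (if 2 * dyadicRadius n ≤ δ then
      2 * ENNReal.ofReal (2 * dyadicRadius n / δ) ^ e else 0) ≤
      if m ≤ n then 2 * q ^ (n - m) else 0 := by
    intro n
    simp only [two_mul_dyadicRadius, hm]
    split_ifs with hmn
    · have hratio : (1 / 2 : ℝ) ^ n / δ ≤ (1 / 2) ^ (n - m) := by
        rw [div_le_iff₀ hδ, ← pow_sub_mul_pow (1 / 2 : ℝ) hmn]
        gcongr
        exact (hm m).mpr le_rfl
      calc 2 * ENNReal.ofReal ((1 / 2 : ℝ) ^ n / δ) ^ e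
          ≤ 2 * ENNReal.ofReal ((1 / 2 : ℝ) ^ (n - m)) ^ e := by gcongr
        _ = 2 * q ^ (n - m) := by
          rw [ENNReal.ofReal_pow (by norm_num), ← ENNReal.rpow_natCast, ← ENNReal.rpow_mul,
            mul_comm ((n - m : ℕ) : ℝ), ENNReal.rpow_mul, ENNReal.rpow_natCast]
    · exact le_rfl
  calc _ ≤ ∑' n, (if m ≤ n then 2 * q ^ (n - m) else 0) := ENNReal.tsum_le_tsum hterm
    _ = ∑' k, 2 * q ^ k := by
      rw [← ENNReal.summable.sum_add_tsum_nat_add' (k := m),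
        Finset.sum_eq_zero fun i hi => if_neg (by simp at hi; omega), zero_add]
      simp
    _ = 2 * (1 - q)⁻¹ := by rw [ENNReal.tsum_mul_left, ENNReal.tsum_geometric]

theorem tsum_shell_le {δ : ℝ} (hδ : 0 < δ) :
    ∑' n, (if dyadicRadius n / 4 < δ ∧ δ < 2 * dyadicRadius n then (2 : ℝ≥0∞) else 0) ≤ 6 := by
  obtain ⟨m, hm⟩ := exists_half_pow_le_iff hδ
  have hquarter : ∀ n, dyadicRadius n / 4 = (1 / 2 : ℝ) ^ (n + 3) := fun n => by
    rw [dyadicRadius]; ring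
  have hsupp : ∀ n ∉ Finset.Ico (m - 3) m,
      (if dyadicRadius n / 4 < δ ∧ δ < 2 * dyadicRadius n then (2 : ℝ≥0∞) else 0) = 0 := by
    intro n hn
    rw [if_neg]
    rintro ⟨hlow, hup⟩
    rw [hquarter] at hlow
    rw [two_mul_dyadicRadius] at hup
    have h1 := (hm (n + 3)).mp hlow.le
    have h2 : ¬ m ≤ n := fun h => hup.not_ge ((hm n).mpr h)
    exact hn (Finset.mem_Ico.mpr ⟨by omega, by omega⟩)
  rw [tsum_eq_sum hsupp]
  calc _ ≤ (Finset.Ico (m - 3) m).card • (2 : ℝ≥0∞) :=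
        Finset.sum_le_card_nsmul _ _ _ fun n _ => by split_ifs <;> simp
    _ ≤ 3 • (2 : ℝ≥0∞) := by
        gcongr
        simp only [Nat.card_Ico]
        omega
    _ = 6 := by norm_num

noncomputable def radialBound (e : ℝ) : ℝ≥0∞ := 2 * (1 - ENNReal.ofReal (1 / 2) ^ e)⁻¹ + 6

theorem radialBound_ne_top {e : ℝ} (he : 0 < e) : radialBound e ≠ ⊤ := by
  have hq : ENNReal.ofReal (1 / 2) ^ e < 1 :=
    ENNReal.rpow_lt_one (by rw [ENNReal.ofReal_lt_one]; norm_num) he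
  unfold radialBound
  have : (1 - ENNReal.ofReal (1 / 2) ^ e)⁻¹ ≠ ⊤ := ENNReal.inv_ne_top.mpr (tsub_pos_of_lt hq).ne'
  finiteness

theorem tsum_radialMajorant_le {e δ : ℝ} (he : 0 < e) (hδ : 0 < δ) :
    ∑' n, radialMajorant e (dyadicRadius n) δ ≤ radialBound e := by
  simp only [radialMajorant]
  rw [ENNReal.tsum_add]
  exact add_le_add (tsum_far_le he hδ) (tsum_shell_le hδ)

section Potential

variable {X : Type*} [MetricSpace X]

noncomputable def doubleLayerKernel (s t : ℝ) (x y a : X) : ℝ≥0∞ :=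
  ENNReal.ofReal (dist x a) ^ (-s) * ENNReal.ofReal (dist y a) ^ (-t)

theorem doubleLayerKernel_comm (s t : ℝ) (x y a : X) :
    doubleLayerKernel s t x y a = doubleLayerKernel t s y x a :=
  mul_comm _ _

variable [MeasurableSpace X]

noncomputable def rieszPotential (ν : Measure X) (α : ℝ) (a : X) : ℝ≥0∞ :=
  ∫⁻ x, ENNReal.ofReal (dist x a) ^ (-α) ∂ν

theorem measure_univ_le_of_rieszPotential_le_one {ν : Measure X} {b : X} {ρ α : ℝ}
    (hα : 0 ≤ α) (hν : ∀ᵐ x ∂ν, dist x b ≤ ρ) (hpot : rieszPotential ν α b ≤ 1) :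
    ν Set.univ ≤ ENNReal.ofReal ρ ^ α := by
  have key : ENNReal.ofReal ρ ^ (-α) * ν Set.univ ≤ 1 :=
    calc ENNReal.ofReal ρ ^ (-α) * ν Set.univ = ∫⁻ _, ENNReal.ofReal ρ ^ (-α) ∂ν :=
          (lintegral_const _).symm
      _ ≤ rieszPotential ν α b :=
          lintegral_mono_ae <| hν.mono fun x hx =>
            rpow_neg_le_rpow_neg (ENNReal.ofReal_le_ofReal hx) hα
      _ ≤ 1 := hpot
  calc ν Set.univ ≤ (ENNReal.ofReal ρ ^ (-α))⁻¹ :=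
        ENNReal.le_inv_iff_mul_le.mpr (by rwa [mul_comm])
    _ = ENNReal.ofReal ρ ^ α := by rw [ENNReal.rpow_neg, inv_inv]

theorem rieszPotential_le_of_measure_univ_le {ν : Measure X} {y : X} {ρ s t : ℝ} (hρ : 0 < ρ)
    (hs : 0 ≤ s) (ht : 0 < t) (hmass : ν Set.univ ≤ ENNReal.ofReal ρ ^ (s + t))
    (hpot : rieszPotential ν (s + t) y ≤ 1) :
    rieszPotential ν t y ≤ 2 * ENNReal.ofReal ρ ^ s := by
  set R := ENNReal.ofReal ρ
  have hR₀ : R ≠ 0 := (ENNReal.ofReal_pos.mpr hρ).ne'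
  have hRs : R ^ s ≠ ⊤ := ENNReal.rpow_ne_top_of_nonneg hs ENNReal.ofReal_ne_top
  have hpointwise : ∀ w : ℝ≥0∞, w ^ (-t) ≤ R ^ (-t) + R ^ s * w ^ (-(s + t)) := by
    intro w
    rcases le_total R w with h | h
    · exact (rpow_neg_le_rpow_neg h ht.le).trans le_self_add
    rcases eq_or_ne w 0 with rfl | hw₀
    · rw [ENNReal.zero_rpow_of_neg (show -(s + t) < 0 by linarith),
        ENNReal.mul_top (ENNReal.rpow_pos (pos_iff_ne_zero.mpr hR₀) ENNReal.ofReal_ne_top).ne']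
      exact le_add_left le_top
    calc w ^ (-t) = w ^ s * w ^ (-(s + t)) := by
          rw [← ENNReal.rpow_add _ _ hw₀ (ne_top_of_le_ne_top ENNReal.ofReal_ne_top h)]
          ring_nf
      _ ≤ R ^ s * w ^ (-(s + t)) := by gcongr
      _ ≤ _ := le_add_self
  calc rieszPotential ν t y
      ≤ ∫⁻ x, (R ^ (-t) + R ^ s * ENNReal.ofReal (dist x y) ^ (-(s + t))) ∂ν :=
        lintegral_mono fun x => hpointwise _
    _ = R ^ (-t) * ν Set.univ + R ^ s * rieszPotential ν (s + t) y := by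
        rw [lintegral_add_left measurable_const, lintegral_const, rieszPotential,
          lintegral_const_mul' _ _ hRs]
    _ ≤ R ^ (-t) * R ^ (s + t) + R ^ s * 1 := by gcongr
    _ = 2 * R ^ s := by
        rw [← ENNReal.rpow_add _ _ hR₀ ENNReal.ofReal_ne_top, show -t + (s + t) = s by ring,
          mul_one, two_mul]

theorem measure_le_of_forall_testMeasure {μ : Measure X} {S : Set X} (hS : MeasurableSet S)
    {α : ℝ} {K c : ℝ≥0∞} (hK₀ : K ≠ 0) (hK : K ≠ ⊤)
    (hpot : ∀ a, ∫⁻ x in S, ENNReal.ofReal (dist x a) ^ (-α) ∂μ ≤ K)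
    (hc : ∀ ν : Measure X, (∀ᵐ a ∂ν, a ∈ S) → (∀ a, rieszPotential ν α a ≤ 1) → ν Set.univ ≤ c) :
    μ S ≤ K * c := by
  have h := hc (K⁻¹ • μ.restrict S) (Measure.ae_smul_measure (ae_restrict_mem hS) _) fun a => by
    rw [rieszPotential, lintegral_smul_measure, smul_eq_mul]
    calc K⁻¹ * ∫⁻ x in S, ENNReal.ofReal (dist x a) ^ (-α) ∂μ ≤ K⁻¹ * K := by gcongr; exact hpot a
      _ = 1 := ENNReal.inv_mul_cancel hK₀ hK
  rw [Measure.smul_apply, Measure.restrict_apply_univ, smul_eq_mul] at h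
  exact (ENNReal.inv_mul_le_iff hK₀ hK).mp h

theorem lintegral_rpow_neg_dist_eq_rieszPotential (ν : Measure X) (α : ℝ) (y : X) :
    ∫⁻ a, ENNReal.ofReal (dist y a) ^ (-α) ∂ν = rieszPotential ν α y :=
  lintegral_congr fun a => by rw [dist_comm]

theorem lintegral_doubleLayerKernel_le_of_far {ν : Measure X} {b x y : X} {ρ s t : ℝ}
    (hρ : 0 < ρ) (hs : 0 ≤ s) (ht : 0 < t) (hν : ∀ᵐ a ∂ν, dist a b ≤ ρ)
    (hmass : ν Set.univ ≤ ENNReal.ofReal ρ ^ (s + t)) (hy : rieszPotential ν (s + t) y ≤ 1)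
    (hx : 2 * ρ ≤ dist x b) :
    ∫⁻ a, doubleLayerKernel s t x y a ∂ν ≤ 2 * ENNReal.ofReal (2 * ρ / dist x b) ^ s := by
  set D := ENNReal.ofReal (dist x b / 2)
  have hD : D ^ (-s) ≠ ⊤ :=
    ENNReal.rpow_ne_top_of_nonneg' (ENNReal.ofReal_pos.mpr (by linarith)) ENNReal.ofReal_ne_top
  calc ∫⁻ a, doubleLayerKernel s t x y a ∂ν
      ≤ ∫⁻ a, D ^ (-s) * ENNReal.ofReal (dist y a) ^ (-t) ∂ν := by
        refine lintegral_mono_ae (hν.mono fun a ha => mul_le_mul' ?_ le_rfl)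
        refine rpow_neg_le_rpow_neg (ENNReal.ofReal_le_ofReal ?_) hs
        linarith [dist_triangle x a b]
    _ = D ^ (-s) * rieszPotential ν t y := by
        rw [lintegral_const_mul' _ _ hD, lintegral_rpow_neg_dist_eq_rieszPotential]
    _ ≤ D ^ (-s) * (2 * ENNReal.ofReal ρ ^ s) := by
        gcongr; exact rieszPotential_le_of_measure_univ_le hρ hs ht hmass hy
    _ = 2 * ENNReal.ofReal (2 * ρ / dist x b) ^ s := by
        rw [show 2 * ρ / dist x b = ρ / (dist x b / 2) by ring,
          ENNReal.ofReal_div_of_pos (by linarith), ENNReal.div_rpow_of_nonneg _ _ hs,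
          ENNReal.rpow_neg, div_eq_mul_inv]
        ring

theorem lintegral_doubleLayerKernel_le_of_near {ν : Measure X} {b x y : X} {ρ s t : ℝ}
    (hs : 0 ≤ s) (ht : 0 ≤ t) (hν : ∀ᵐ a ∂ν, ρ / 2 ≤ dist a b) (hx : dist x b ≤ ρ / 4)
    (hy : dist y b ≤ ρ / 4) :
    ∫⁻ a, doubleLayerKernel s t x y a ∂ν ≤ ENNReal.ofReal (ρ / 4) ^ (-(s + t)) * ν Set.univ :=
  calc ∫⁻ a, doubleLayerKernel s t x y a ∂ν
      ≤ ∫⁻ _, ENNReal.ofReal (ρ / 4) ^ (-s) * ENNReal.ofReal (ρ / 4) ^ (-t) ∂ν := by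
        refine lintegral_mono_ae (hν.mono fun a ha => mul_le_mul' ?_ ?_)
        · refine rpow_neg_le_rpow_neg (ENNReal.ofReal_le_ofReal ?_) hs
          linarith [dist_triangle a x b, dist_comm a x]
        · refine rpow_neg_le_rpow_neg (ENNReal.ofReal_le_ofReal ?_) ht
          linarith [dist_triangle a y b, dist_comm a y]
    _ = ENNReal.ofReal (ρ / 4) ^ (-(s + t)) * ν Set.univ := by
        rw [lintegral_const, rpow_neg_mul_rpow_neg _ hs ht]

noncomputable def majorant (s t : ℝ) (b : X) (ρ : ℝ) (p : X × X) : ℝ≥0∞ :=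
  radialMajorant s ρ (dist p.1 b) + radialMajorant t ρ (dist p.2 b)

noncomputable def doubleLayerPotential (μ : Measure (X × X)) (s t : ℝ) (a : X) : ℝ≥0∞ :=
  ∫⁻ p, doubleLayerKernel s t p.1 p.2 a ∂μ

def exceptionalSet (μ : Measure (X × X)) (b : X) (s t ε : ℝ) : Set X :=
  {a | ENNReal.ofReal ε ≤ ENNReal.ofReal (dist a b) ^ (s + t) * doubleLayerPotential μ s t a}

theorem ofReal_rpow_mul_ofReal_div_four_rpow_neg {ρ : ℝ} (hρ : 0 < ρ) (α : ℝ) :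
    ENNReal.ofReal ρ ^ α * ENNReal.ofReal (ρ / 4) ^ (-α) = 4 ^ α := by
  rw [div_eq_mul_inv, ENNReal.ofReal_mul hρ.le, ENNReal.ofReal_inv_of_pos four_pos,
    ENNReal.ofReal_ofNat, ENNReal.mul_rpow_of_ne_top ENNReal.ofReal_ne_top (by simp), ← mul_assoc,
    ENNReal.inv_rpow, ENNReal.rpow_neg 4, inv_inv, ENNReal.rpow_neg (ENNReal.ofReal ρ),
    ENNReal.mul_inv_cancel, one_mul]
  · exact (ENNReal.rpow_pos (ENNReal.ofReal_pos.mpr hρ) ENNReal.ofReal_ne_top).ne'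
  · exact ENNReal.rpow_ne_top_of_nonneg' (ENNReal.ofReal_pos.mpr hρ) ENNReal.ofReal_ne_top

variable [OpensMeasurableSpace X]

theorem measurable_ofReal_dist_rpow (x : X) (α : ℝ) :
    Measurable fun a => ENNReal.ofReal (dist x a) ^ α :=
  (continuous_const.dist continuous_id).measurable.ennreal_ofReal.pow_const α

theorem lintegral_doubleLayerKernel_le_two {ν : Measure X} {s t : ℝ}
    (hs : 0 ≤ s) (ht : 0 ≤ t) {x y : X} (hx : rieszPotential ν (s + t) x ≤ 1)
    (hy : rieszPotential ν (s + t) y ≤ 1) :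
    ∫⁻ a, doubleLayerKernel s t x y a ∂ν ≤ 2 :=
  calc ∫⁻ a, doubleLayerKernel s t x y a ∂ν
      ≤ ∫⁻ a, (ENNReal.ofReal (dist x a) ^ (-(s + t)) +
          ENNReal.ofReal (dist y a) ^ (-(s + t))) ∂ν :=
        lintegral_mono fun a => mul_rpow_neg_le_add hs ht _ _
    _ = rieszPotential ν (s + t) x + rieszPotential ν (s + t) y := by
        rw [lintegral_add_left (measurable_ofReal_dist_rpow x _),
          lintegral_rpow_neg_dist_eq_rieszPotential, lintegral_rpow_neg_dist_eq_rieszPotential]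
    _ ≤ 2 := by rw [← one_add_one_eq_two]; gcongr

theorem lintegral_doubleLayerKernel_le_majorant {ν : Measure X} {b : X} {ρ s t : ℝ}
    (hρ : 0 < ρ) (hs : 0 < s) (ht : 0 < t)
    (hν : ∀ᵐ a ∂ν, ρ / 2 ≤ dist a b ∧ dist a b ≤ ρ) (hpot : ∀ a, rieszPotential ν (s + t) a ≤ 1)
    (p : X × X) :
    ∫⁻ a, doubleLayerKernel s t p.1 p.2 a ∂ν ≤ majorant s t b ρ p +
      (Prod.fst ⁻¹' closedBall b (ρ / 4)).indicator
        (fun _ => ENNReal.ofReal (ρ / 4) ^ (-(s + t)) * ν Set.univ) p := by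
  obtain ⟨x, y⟩ := p
  have hmass : ν Set.univ ≤ ENNReal.ofReal ρ ^ (s + t) :=
    measure_univ_le_of_rieszPotential_le_one (by positivity) (hν.mono fun _ h => h.2) (hpot b)
  have hG := lintegral_doubleLayerKernel_le_two hs.le ht.le (hpot x) (hpot y)
  by_cases hx : 2 * ρ ≤ dist x b
  · refine le_trans ?_ le_self_add
    exact (lintegral_doubleLayerKernel_le_of_far hρ hs.le ht (hν.mono fun _ h => h.2) hmass
      (hpot y) hx).trans ((far_le_radialMajorant hx).trans le_self_add)
  by_cases hy : 2 * ρ ≤ dist y b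
  · refine le_trans ?_ le_self_add
    simp_rw [doubleLayerKernel_comm s t x y]
    rw [add_comm s t] at hmass hpot
    exact (lintegral_doubleLayerKernel_le_of_far hρ ht.le hs (hν.mono fun _ h => h.2) hmass
      (hpot x) hy).trans ((far_le_radialMajorant hy).trans le_add_self)
  push Not at hx hy
  by_cases hx' : dist x b ≤ ρ / 4
  · by_cases hy' : dist y b ≤ ρ / 4
    · refine le_trans ?_ le_add_self
      rw [Set.indicator_of_mem (show (x, y) ∈ Prod.fst ⁻¹' closedBall b (ρ / 4) from hx')]
      exact lintegral_doubleLayerKernel_le_of_near hs.le ht.le (hν.mono fun _ h => h.1) hx' hy'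
    · exact hG.trans ((two_le_radialMajorant (not_le.mp hy') hy).trans
        (le_add_self.trans le_self_add))
  · exact hG.trans ((two_le_radialMajorant (not_le.mp hx') hx).trans
      (le_self_add.trans le_self_add))

theorem tendsto_measure_fst_preimage_closedBall (μ : Measure (X × X)) [IsFiniteMeasure μ]
    (b : X) :
    Tendsto (fun r => μ (Prod.fst ⁻¹' closedBall b r)) (𝓝[≥] 0) (𝓝 (μ {p | p.1 = b})) := by
  have h := tendsto_measure_cthickening_of_isClosed (μ := μ.map Prod.fst)
    ⟨1, one_pos, measure_ne_top _ _⟩ (isClosed_singleton (x := b))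
  rw [Measure.map_apply measurable_fst (measurableSet_singleton b)] at h
  refine (h.mono_left nhdsWithin_le_nhds).congr' (eventually_nhdsWithin_of_forall fun r hr => ?_)
  rw [cthickening_singleton b hr, Measure.map_apply measurable_fst measurableSet_closedBall]

variable [SecondCountableTopology X]

theorem measurable_doubleLayerKernel (s t : ℝ) :
    Measurable fun q : X × (X × X) => doubleLayerKernel s t q.2.1 q.2.2 q.1 :=
  ((continuous_snd.fst.dist continuous_fst).measurable.ennreal_ofReal.pow_const _).mul
    ((continuous_snd.snd.dist continuous_fst).measurable.ennreal_ofReal.pow_const _)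

theorem measurableSet_exceptionalSet (μ : Measure (X × X)) [SFinite μ] (b : X) (s t ε : ℝ) :
    MeasurableSet (exceptionalSet μ b s t ε) :=
  measurableSet_le measurable_const
    (((continuous_id.dist continuous_const).measurable.ennreal_ofReal.pow_const _).mul
      (measurable_doubleLayerKernel s t).lintegral_prod_right)

theorem lintegral_doubleLayerPotential (μ : Measure (X × X)) (ν : Measure X) [SFinite μ]
    [SFinite ν] (s t : ℝ) :
    ∫⁻ a, doubleLayerPotential μ s t a ∂ν = ∫⁻ p, ∫⁻ a, doubleLayerKernel s t p.1 p.2 a ∂ν ∂μ :=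
  lintegral_lintegral_swap (measurable_doubleLayerKernel s t).aemeasurable

theorem ofReal_mul_measure_univ_le_lintegral_majorant {μ : Measure (X × X)} [SFinite μ]
    {ν : Measure X} {b : X} {ρ s t ε : ℝ} (hρ : 0 < ρ) (hs : 0 < s) (ht : 0 < t)
    (hν : ∀ᵐ a ∂ν, a ∈ exceptionalSet μ b s t ε ∧ ρ / 2 ≤ dist a b ∧ dist a b ≤ ρ)
    (hpot : ∀ a, rieszPotential ν (s + t) a ≤ 1) :
    ENNReal.ofReal ε * ν Set.univ ≤ ENNReal.ofReal ρ ^ (s + t) * ∫⁻ p, majorant s t b ρ p ∂μ +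
      4 ^ (s + t) * μ (Prod.fst ⁻¹' closedBall b (ρ / 4)) * ν Set.univ := by
  have hmass : ν Set.univ ≤ ENNReal.ofReal ρ ^ (s + t) :=
    measure_univ_le_of_rieszPotential_le_one (by positivity) (hν.mono fun _ h => h.2.2) (hpot b)
  have : IsFiniteMeasure ν := ⟨hmass.trans_lt (ENNReal.rpow_lt_top_of_nonneg (by positivity)
    ENNReal.ofReal_ne_top)⟩
  set R := ENNReal.ofReal ρ ^ (s + t)
  have hR : R ≠ ⊤ := ENNReal.rpow_ne_top_of_nonneg (by positivity) ENNReal.ofReal_ne_top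
  have hD : MeasurableSet (Prod.fst ⁻¹' closedBall b (ρ / 4) : Set (X × X)) :=
    measurable_fst measurableSet_closedBall
  calc ENNReal.ofReal ε * ν Set.univ = ∫⁻ _, ENNReal.ofReal ε ∂ν := (lintegral_const _).symm
    _ ≤ ∫⁻ a, R * doubleLayerPotential μ s t a ∂ν := by
        refine lintegral_mono_ae (hν.mono fun a ha => ha.1.trans ?_)
        gcongr
        exact ENNReal.rpow_le_rpow (ENNReal.ofReal_le_ofReal ha.2.2) (by positivity)
    _ = R * ∫⁻ p, ∫⁻ a, doubleLayerKernel s t p.1 p.2 a ∂ν ∂μ := by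
        rw [lintegral_const_mul' _ _ hR, lintegral_doubleLayerPotential]
    _ ≤ R * ∫⁻ p, (majorant s t b ρ p + (Prod.fst ⁻¹' closedBall b (ρ / 4)).indicator
          (fun _ => ENNReal.ofReal (ρ / 4) ^ (-(s + t)) * ν Set.univ) p) ∂μ := by
        gcongr with p
        exact lintegral_doubleLayerKernel_le_majorant hρ hs ht (hν.mono fun _ h => h.2) hpot p
    _ = _ := by
        rw [lintegral_add_right _ (measurable_const.indicator hD), lintegral_indicator_const hD,
          mul_add, ← mul_assoc, ← mul_assoc, ofReal_rpow_mul_ofReal_div_four_rpow_neg hρ]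
        ring

theorem measure_univ_le_of_measure_near_le {μ : Measure (X × X)} [SFinite μ] {ν : Measure X}
    {b : X} {ρ s t ε : ℝ} (hρ : 0 < ρ) (hs : 0 < s) (ht : 0 < t) (hε : 0 < ε)
    (hnear : 4 ^ (s + t) * μ (Prod.fst ⁻¹' closedBall b (ρ / 4)) ≤ ENNReal.ofReal ε / 2)
    (hν : ∀ᵐ a ∂ν, a ∈ exceptionalSet μ b s t ε ∧ ρ / 2 ≤ dist a b ∧ dist a b ≤ ρ)
    (hpot : ∀ a, rieszPotential ν (s + t) a ≤ 1) :
    ν Set.univ ≤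
      ENNReal.ofReal ρ ^ (s + t) * (2 * (ENNReal.ofReal ε)⁻¹ * ∫⁻ p, majorant s t b ρ p ∂μ) := by
  have hε' : ENNReal.ofReal ε ≠ 0 := (ENNReal.ofReal_pos.mpr hε).ne'
  have hmass : ν Set.univ ≤ ENNReal.ofReal ρ ^ (s + t) :=
    measure_univ_le_of_rieszPotential_le_one (by positivity) (hν.mono fun _ h => h.2.2) (hpot b)
  have hfin : ENNReal.ofReal ε * ν Set.univ ≠ ⊤ :=
    ENNReal.mul_ne_top ENNReal.ofReal_ne_top (ne_top_of_le_ne_top (by finiteness) hmass)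
  have habs := mul_le_two_mul_of_le_add_half_mul hfin
    ((ofReal_mul_measure_univ_le_lintegral_majorant hρ hs ht hν hpot).trans (by gcongr))
  calc ν Set.univ = (ENNReal.ofReal ε)⁻¹ * (ENNReal.ofReal ε * ν Set.univ) := by
        rw [← mul_assoc, ENNReal.inv_mul_cancel hε' ENNReal.ofReal_ne_top, one_mul]
    _ ≤ (ENNReal.ofReal ε)⁻¹ *
          (2 * (ENNReal.ofReal ρ ^ (s + t) * ∫⁻ p, majorant s t b ρ p ∂μ)) := by
        gcongr
    _ = _ := by ring

theorem measurable_majorant (s t : ℝ) (b : X) (ρ : ℝ) : Measurable (majorant s t b ρ) :=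
  ((measurable_radialMajorant s ρ).comp (continuous_fst.dist continuous_const).measurable).add
    ((measurable_radialMajorant t ρ).comp (continuous_snd.dist continuous_const).measurable)

theorem tsum_lintegral_majorant_le (μ : Measure (X × X)) {b : X} (hV : μ {p | p.1 = b} = 0)
    (hH : μ {p | p.2 = b} = 0) {s t : ℝ} (hs : 0 < s) (ht : 0 < t) :
    ∑' n, ∫⁻ p, majorant s t b (dyadicRadius n) p ∂μ ≤
      (radialBound s + radialBound t) * μ Set.univ := by
  have hoff : ∀ᵐ p ∂μ, p.1 ≠ b ∧ p.2 ≠ b := by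
    refine ae_iff.mpr (measure_mono_null (fun p hp => ?_) (measure_union_null hV hH))
    by_contra h
    exact hp ⟨fun h1 => h (Or.inl h1), fun h2 => h (Or.inr h2)⟩
  rw [← lintegral_tsum fun n => (measurable_majorant s t b _).aemeasurable, ← lintegral_const]
  refine lintegral_mono_ae (hoff.mono fun p hp => ?_)
  simp only [majorant]
  rw [ENNReal.tsum_add]
  exact add_le_add (tsum_radialMajorant_le hs (dist_pos.mpr hp.1))
    (tsum_radialMajorant_le ht (dist_pos.mpr hp.2))

theorem exists_tsum_ne_top_and_measure_univ_le {μ : Measure (X × X)} [IsFiniteMeasure μ] {b : X}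
    (hV : μ {p | p.1 = b} = 0) (hH : μ {p | p.2 = b} = 0) {s t ε : ℝ} (hs : 0 < s) (ht : 0 < t)
    (hε : 0 < ε) :
    ∃ c : ℕ → ℝ≥0∞, ∑' n, c n ≠ ⊤ ∧ ∀ n (ν : Measure X),
      (∀ᵐ a ∂ν, a ∈ exceptionalSet μ b s t ε ∧
        dyadicRadius n / 2 ≤ dist a b ∧ dist a b ≤ dyadicRadius n) →
      (∀ a, rieszPotential ν (s + t) a ≤ 1) →
      ν Set.univ ≤ ENNReal.ofReal (dyadicRadius n) ^ (s + t) * c n := by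
  have hε' : ENNReal.ofReal ε ≠ 0 := (ENNReal.ofReal_pos.mpr hε).ne'
  obtain ⟨n₀, hn₀⟩ : ∃ n₀, ∀ n ≥ n₀, 4 ^ (s + t) *
      μ (Prod.fst ⁻¹' closedBall b (dyadicRadius n / 4)) < ENNReal.ofReal ε / 2 := by
    have h := ENNReal.Tendsto.const_mul ((tendsto_measure_fst_preimage_closedBall μ b).comp
      tendsto_dyadicRadius_div_four) (Or.inr (show (4 : ℝ≥0∞) ^ (s + t) ≠ ⊤ by finiteness))
    rw [hV, mul_zero] at h
    exact eventually_atTop.mp (h.eventually_lt_const (ENNReal.half_pos hε'))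
  refine ⟨fun n => (if n < n₀ then 1 else 0) +
    2 * (ENNReal.ofReal ε)⁻¹ * ∫⁻ p, majorant s t b (dyadicRadius n) p ∂μ, ?_, ?_⟩
  · rw [ENNReal.tsum_add, ENNReal.tsum_mul_left,
      tsum_eq_sum (s := Finset.range n₀) fun n hn => if_neg (by simpa using hn)]
    refine ENNReal.add_ne_top.mpr ⟨ENNReal.sum_ne_top.mpr fun n _ => by split_ifs <;> simp,
      ENNReal.mul_ne_top (by finiteness)
        (ne_top_of_le_ne_top ?_ (tsum_lintegral_majorant_le μ hV hH hs ht))⟩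
    exact ENNReal.mul_ne_top (ENNReal.add_ne_top.mpr ⟨radialBound_ne_top hs, radialBound_ne_top ht⟩)
      (measure_ne_top μ _)
  intro n ν hν hpot
  rcases lt_or_ge n n₀ with hn | hn
  · refine (measure_univ_le_of_rieszPotential_le_one (by positivity) (hν.mono fun _ h => h.2.2)
      (hpot b)).trans (le_mul_of_one_le_right' ?_)
    simp [hn]
  · simpa [not_lt.mpr hn] using
      measure_univ_le_of_measure_near_le (dyadicRadius_pos n) hs ht hε (hn₀ n hn).le hν hpot

end Potential

section Lebesgue

variable {E : Type*} [NormedAddCommGroup E] [NormedSpace ℝ E] [FiniteDimensional ℝ E]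
  [MeasurableSpace E] [BorelSpace E] (μ : Measure E) [μ.IsAddHaarMeasure]

theorem setLIntegral_closedBall_rpow_neg_dist {R : ℝ} (hR : 0 < R) (a : E) (α : ℝ) :
    ∫⁻ x in closedBall a R, ENNReal.ofReal (dist x a) ^ (-α) ∂μ =
      ENNReal.ofReal R ^ ((Module.finrank ℝ E : ℝ) - α) *
        ∫⁻ y in closedBall 0 1, ENNReal.ofReal ‖y‖ ^ (-α) ∂μ := by
  set F : E → ℝ≥0∞ := (closedBall (0 : E) R).indicator fun y => ENNReal.ofReal ‖y‖ ^ (-α)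
  have hF : Measurable F :=
    (measurable_norm.ennreal_ofReal.pow_const _).indicator measurableSet_closedBall
  have htranslate : ∫⁻ x in closedBall a R, ENNReal.ofReal (dist x a) ^ (-α) ∂μ = ∫⁻ y, F y ∂μ := by
    rw [← lintegral_indicator measurableSet_closedBall, ← lintegral_sub_right_eq_self F a]
    congr 1 with x
    simp only [F, Set.indicator, mem_closedBall, dist_eq_norm, sub_zero]
  have hdilate : ∀ z, F (R • z) = ENNReal.ofReal R ^ (-α) *
      (closedBall (0 : E) 1).indicator (fun y => ENNReal.ofReal ‖y‖ ^ (-α)) z := by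
    intro z
    simp only [F, Set.indicator, mem_closedBall_zero_iff, norm_smul, Real.norm_of_nonneg hR.le,
      mul_le_iff_le_one_right hR, ENNReal.ofReal_mul hR.le,
      ENNReal.mul_rpow_of_ne_top ENNReal.ofReal_ne_top ENNReal.ofReal_ne_top]
    split_ifs <;> simp
  have hmap := lintegral_map hF (measurable_const_smul R) (μ := μ)
  rw [Measure.map_addHaar_smul μ hR.ne', lintegral_smul_measure, abs_of_pos (by positivity),
    smul_eq_mul] at hmap
  rw [htranslate, ← ofReal_rpow_neg_mul_ofReal_pow hR α, mul_comm (ENNReal.ofReal R ^ (-α)),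
    mul_assoc]
  calc ∫⁻ y, F y ∂μ
      = ENNReal.ofReal (R ^ Module.finrank ℝ E) *
          (ENNReal.ofReal (R ^ Module.finrank ℝ E)⁻¹ * ∫⁻ y, F y ∂μ) := by
        rw [← mul_assoc, ← ENNReal.ofReal_mul (by positivity), mul_inv_cancel₀ (by positivity),
          ENNReal.ofReal_one, one_mul]
    _ = _ := by
        rw [hmap]
        simp_rw [hdilate]
        rw [lintegral_const_mul _ ((measurable_norm.ennreal_ofReal.pow_const _).indicator
          measurableSet_closedBall), lintegral_indicator measurableSet_closedBall]

theorem setLIntegral_closedBall_rpow_neg_norm_ne_top {α : ℝ} (hα₀ : 0 ≤ α)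
    (hα : α < Module.finrank ℝ E) :
    ∫⁻ y in closedBall 0 1, ENNReal.ofReal ‖y‖ ^ (-α) ∂μ ≠ ⊤ := by
  have hd : 1 ≤ Module.finrank ℝ E := by
    have : (0 : ℝ) < Module.finrank ℝ E := hα₀.trans_lt hα
    exact_mod_cast this
  have : Nontrivial E := Module.nontrivial_of_finrank_pos (R := ℝ) hd
  have hint : IntegrableOn (fun y : E => ‖y‖ ^ (-α)) (ball 0 2) μ :=
    integrableOn_ball_of_norm_le_rpow hd hα (C := 1)
      (Eventually.of_forall fun y => by rw [one_mul, Real.norm_of_nonneg (by positivity)])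
      (measurable_norm.pow_const _).aestronglyMeasurable
  refine ne_top_of_le_ne_top hint.2.ne ?_
  calc ∫⁻ y in closedBall 0 1, ENNReal.ofReal ‖y‖ ^ (-α) ∂μ
      ≤ ∫⁻ y in ball 0 2, ENNReal.ofReal ‖y‖ ^ (-α) ∂μ :=
        lintegral_mono_set (closedBall_subset_ball (by norm_num))
    _ = ∫⁻ y in ball 0 2, ‖‖y‖ ^ (-α)‖ₑ ∂μ := by
        refine lintegral_congr_ae (ae_restrict_of_ae ?_)
        filter_upwards [compl_mem_ae_iff.mpr (measure_singleton (μ := μ) (0 : E))] with y hy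
        rw [Real.enorm_of_nonneg (by positivity),
          ENNReal.ofReal_rpow_of_pos (norm_pos_iff.mpr hy)]

theorem exists_setLIntegral_closedBall_rpow_neg_dist_le {α : ℝ} (hα₀ : 0 ≤ α)
    (hα : α < Module.finrank ℝ E) :
    ∃ C : ℝ≥0∞, C ≠ 0 ∧ C ≠ ⊤ ∧ ∀ (b a : E) {ρ : ℝ}, 0 < ρ →
      ∫⁻ x in closedBall b ρ, ENNReal.ofReal (dist x a) ^ (-α) ∂μ ≤
        C * ENNReal.ofReal ρ ^ ((Module.finrank ℝ E : ℝ) - α) := by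
  set C₀ := ∫⁻ y in closedBall 0 1, ENNReal.ofReal ‖y‖ ^ (-α) ∂μ
  refine ⟨C₀ + μ (ball 0 1), (measure_ball_pos μ 0 one_pos).ne' ∘ (add_eq_zero.mp · |>.2),
    ENNReal.add_ne_top.mpr ⟨setLIntegral_closedBall_rpow_neg_norm_ne_top μ hα₀ hα,
      measure_ball_lt_top.ne⟩, fun b a ρ hρ => ?_⟩
  have hpointwise : ∀ x, ENNReal.ofReal (dist x a) ^ (-α) ≤
      (closedBall a ρ).indicator (fun x => ENNReal.ofReal (dist x a) ^ (-α)) x +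
        ENNReal.ofReal ρ ^ (-α) := by
    intro x
    by_cases hx : x ∈ closedBall a ρ
    · rw [Set.indicator_of_mem hx]; exact le_self_add
    · refine le_add_left (rpow_neg_le_rpow_neg (ENNReal.ofReal_le_ofReal ?_) hα₀)
      exact (not_le.mp (mt mem_closedBall.mpr hx)).le
  calc ∫⁻ x in closedBall b ρ, ENNReal.ofReal (dist x a) ^ (-α) ∂μ
      ≤ ∫⁻ x in closedBall b ρ, ((closedBall a ρ).indicator
          (fun x => ENNReal.ofReal (dist x a) ^ (-α)) x + ENNReal.ofReal ρ ^ (-α)) ∂μ :=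
        lintegral_mono hpointwise
    _ ≤ ∫⁻ x, (closedBall a ρ).indicator (fun x => ENNReal.ofReal (dist x a) ^ (-α)) x ∂μ +
          ENNReal.ofReal ρ ^ (-α) * μ (closedBall b ρ) := by
        rw [lintegral_add_right _ measurable_const, setLIntegral_const]
        exact add_le_add_left (setLIntegral_le_lintegral _ _) _
    _ = _ := by
        rw [lintegral_indicator measurableSet_closedBall,
          setLIntegral_closedBall_rpow_neg_dist μ hρ, Measure.addHaar_closedBall μ b hρ.le,
          ← mul_assoc, ofReal_rpow_neg_mul_ofReal_pow hρ]
        ring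

theorem exists_measure_le_of_subset_closedBall {α : ℝ} (hα₀ : 0 ≤ α)
    (hα : α < Module.finrank ℝ E) :
    ∃ C : ℝ≥0∞, C ≠ ⊤ ∧ ∀ (b : E) {ρ : ℝ}, 0 < ρ → ∀ {S : Set E}, MeasurableSet S →
      S ⊆ closedBall b ρ → ∀ {c : ℝ≥0∞}, (∀ ν : Measure E, (∀ᵐ a ∂ν, a ∈ S) →
        (∀ a, rieszPotential ν α a ≤ 1) → ν Set.univ ≤ ENNReal.ofReal ρ ^ α * c) →
      μ S ≤ ENNReal.ofReal (ρ ^ Module.finrank ℝ E) * (C * c) := by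
  obtain ⟨C, hC₀, hC, hpot⟩ := exists_setLIntegral_closedBall_rpow_neg_dist_le μ hα₀ hα
  refine ⟨C, hC, fun b ρ hρ S hS hSb c hc => ?_⟩
  have hρ' : ENNReal.ofReal ρ ≠ 0 := (ENNReal.ofReal_pos.mpr hρ).ne'
  calc μ S ≤ C * ENNReal.ofReal ρ ^ ((Module.finrank ℝ E : ℝ) - α) *
        (ENNReal.ofReal ρ ^ α * c) :=
        measure_le_of_forall_testMeasure hS (mul_ne_zero hC₀ (by positivity)) (by finiteness)
          (fun a => (lintegral_mono_set hSb).trans (hpot b a hρ)) hc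
    _ = ENNReal.ofReal ρ ^ ((Module.finrank ℝ E : ℝ) - α + α) * (C * c) := by
        rw [ENNReal.rpow_add _ _ hρ' ENNReal.ofReal_ne_top]; ring
    _ = _ := by
        rw [sub_add_cancel, ENNReal.rpow_natCast, ENNReal.ofReal_pow hρ.le]

end Lebesgue

section Euclidean

variable {d : ℕ}

theorem mem_annulus_succ_iff {b a : EuclideanSpace ℝ (Fin d)} {n : ℕ} :
    a ∈ annulus d b (n + 1) ↔ dyadicRadius n / 2 ≤ dist a b ∧ dist a b ≤ dyadicRadius n := by
  rw [annulus, Set.mem_ofPred_eq, dyadicRadius, show ((1 : ℝ) / 2) ^ (n + 1 + 1) =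
    (1 / 2) ^ (n + 1) / 2 by ring]

theorem measurableSet_annulus (b : EuclideanSpace ℝ (Fin d)) (n : ℕ) :
    MeasurableSet (annulus d b n) :=
  (measurableSet_le measurable_const (continuous_id.dist continuous_const).measurable).inter
    (measurableSet_le (continuous_id.dist continuous_const).measurable measurable_const)

theorem tsum_two_rpow_mul_rieszCap_ne_top {α : ℝ} {S : ℕ → Set (EuclideanSpace ℝ (Fin d))}
    {c : ℕ → ℝ≥0∞} (hc : ∑' n, c n ≠ ⊤)
    (h : ∀ n (ν : Measure (EuclideanSpace ℝ (Fin d))), (∀ᵐ a ∂ν, a ∈ S n) →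
      (∀ a, rieszPotential ν α a ≤ 1) → ν Set.univ ≤ ENNReal.ofReal (dyadicRadius n) ^ α * c n) :
    ∑' n : ℕ, (2 : ℝ≥0∞) ^ (α * ((n : ℝ) + 1)) * rieszCap d α (S n) ≠ ⊤ := by
  refine ne_top_of_le_ne_top hc (ENNReal.tsum_le_tsum fun n => ?_)
  have hcap : rieszCap d α (S n) ≤ ENNReal.ofReal (dyadicRadius n) ^ α * c n :=
    iSup_le fun ν => iSup_le fun ⟨_, _, hKS, hK⟩ => iSup_le fun hpot =>
      h n ν (ae_iff.mpr (measure_mono_null (fun _ ha hK' => ha (hKS hK')) hK)) hpot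
  calc (2 : ℝ≥0∞) ^ (α * ((n : ℝ) + 1)) * rieszCap d α (S n)
      ≤ (2 : ℝ≥0∞) ^ (α * ((n : ℝ) + 1)) * (ENNReal.ofReal (dyadicRadius n) ^ α * c n) := by
        gcongr
    _ = c n := by rw [← mul_assoc, two_rpow_mul_dyadicRadius_rpow, one_mul]

theorem closedBall_subset_union_iUnion_annulus (b : EuclideanSpace ℝ (Fin d)) (m : ℕ) :
    closedBall b ((1 / 2 : ℝ) ^ (m + 1)) ⊆ {b} ∪ ⋃ k, annulus d b (k + m) := by
  intro a ha
  rcases eq_or_ne a b with rfl | hab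
  · exact Or.inl rfl
  obtain ⟨j, hj⟩ := exists_half_pow_le_iff (dist_pos.mpr hab)
  have hjm : m + 1 ≤ j := by
    by_contra! h
    have h₁ : (1 / 2 : ℝ) ^ m ≤ (1 / 2) ^ j :=
      pow_le_pow_of_le_one (by norm_num) (by norm_num) (by omega)
    have h₂ : (1 / 2 : ℝ) ^ (m + 1) < (1 / 2) ^ m :=
      pow_lt_pow_right_of_lt_one₀ (by norm_num) (by norm_num) (by omega)
    linarith [(hj j).mpr le_rfl, mem_closedBall.mp ha]
  have hlow : (1 / 2 : ℝ) ^ (j - 1 + 1) ≤ dist a b := by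
    rw [Nat.sub_add_cancel (by omega)]; exact (hj j).mpr le_rfl
  have hup : dist a b ≤ (1 / 2 : ℝ) ^ (j - 1) :=
    (not_le.mp fun h => by have := (hj _).mp h; omega).le
  refine Or.inr (Set.mem_iUnion.mpr ⟨j - 1 - m, ?_⟩)
  rw [Nat.sub_add_cancel (by omega)]
  exact ⟨hlow, hup⟩

theorem volume_inter_closedBall_le {E : Set (EuclideanSpace ℝ (Fin d))}
    {b : EuclideanSpace ℝ (Fin d)} (hb : volume ({b} : Set (EuclideanSpace ℝ (Fin d))) = 0)
    {c : ℕ → ℝ≥0∞}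
    (hE : ∀ n, volume (annulus d b (n + 1) ∩ E) ≤ ENNReal.ofReal (dyadicRadius n ^ d) * c n)
    (m : ℕ) :
    volume (E ∩ closedBall b ((1 / 2 : ℝ) ^ (m + 2))) ≤
      ENNReal.ofReal (dyadicRadius m ^ d) * ∑' k, c (k + m) := by
  have hcover : E ∩ closedBall b ((1 / 2 : ℝ) ^ (m + 2)) ⊆
      {b} ∪ ⋃ k, annulus d b (k + m + 1) ∩ E := by
    rintro a ⟨haE, hab⟩
    rcases closedBall_subset_union_iUnion_annulus b (m + 1) hab with h | h
    · exact Or.inl h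
    · obtain ⟨k, hk⟩ := Set.mem_iUnion.mp h
      exact Or.inr (Set.mem_iUnion.mpr ⟨k, hk, haE⟩)
  calc volume (E ∩ closedBall b ((1 / 2 : ℝ) ^ (m + 2)))
      ≤ volume ({b} : Set (EuclideanSpace ℝ (Fin d))) +
          ∑' k, volume (annulus d b (k + m + 1) ∩ E) :=
        (measure_mono hcover).trans ((measure_union_le _ _).trans
          (add_le_add le_rfl (measure_iUnion_le _)))
    _ ≤ ∑' k, ENNReal.ofReal (dyadicRadius m ^ d) * c (k + m) := by
        rw [hb, zero_add]
        refine ENNReal.tsum_le_tsum fun k => (hE (k + m)).trans ?_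
        gcongr
        · exact (dyadicRadius_pos _).le
        · exact pow_le_pow_of_le_one (by norm_num) (by norm_num) (by omega)
    _ = _ := ENNReal.tsum_mul_left

theorem densityZeroAt_of_volume_annulus_le (hd : 0 < d) {E : Set (EuclideanSpace ℝ (Fin d))}
    {b : EuclideanSpace ℝ (Fin d)} {c : ℕ → ℝ≥0∞} (hc : ∑' n, c n ≠ ⊤)
    (hE : ∀ n, volume (annulus d b (n + 1) ∩ E) ≤ ENNReal.ofReal (dyadicRadius n ^ d) * c n) :
    DensityZeroAt d E b := by
  have : Nontrivial (EuclideanSpace ℝ (Fin d)) :=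
    Module.nontrivial_of_finrank_pos (R := ℝ) (by rwa [finrank_euclideanSpace_fin])
  have htail := ENNReal.Tendsto.const_mul (ENNReal.tendsto_sum_nat_add c hc)
    (Or.inr (show (4 : ℝ≥0∞) ^ d ≠ ⊤ by finiteness))
  rw [mul_zero] at htail
  refine ENNReal.tendsto_nhds_zero.mpr fun η hη => ?_
  obtain ⟨M, hM⟩ := eventually_atTop.mp (htail.eventually_le_const hη)
  filter_upwards [Ioo_mem_nhdsGT (show (0 : ℝ) < (1 / 2) ^ (M + 3) by positivity)]
    with r ⟨hr₀, hrM⟩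
  obtain ⟨j, hj⟩ := exists_half_pow_le_iff hr₀
  have hjM : M + 3 < j := by
    by_contra! h
    exact hrM.not_ge ((hj _).mpr h)
  obtain ⟨m, rfl⟩ : ∃ m, j = m + 3 := ⟨j - 3, by omega⟩
  have hr_up : r ≤ (1 / 2 : ℝ) ^ (m + 2) :=
    (not_le.mp fun h => by have := (hj _).mp h; omega).le
  have hr_low : (1 / 2 : ℝ) ^ (m + 3) ≤ r := (hj _).mpr le_rfl
  refine ENNReal.div_le_of_le_mul ?_
  calc volume (E ∩ closedBall b r)
      ≤ ENNReal.ofReal (dyadicRadius m ^ d) * ∑' k, c (k + m) :=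
        (measure_mono (Set.inter_subset_inter_right _ (closedBall_subset_closedBall hr_up))).trans
          (volume_inter_closedBall_le (measure_singleton b) hE m)
    _ = ENNReal.ofReal (((1 / 2 : ℝ) ^ (m + 3)) ^ d) * (4 ^ d * ∑' k, c (k + m)) := by
        rw [← mul_assoc, mul_comm _ ((4 : ℝ≥0∞) ^ d), ← ENNReal.ofReal_ofNat 4,
          ← ENNReal.ofReal_pow (by norm_num), ← ENNReal.ofReal_mul (by positivity), ← mul_pow,
          dyadicRadius]
        ring_nf
    _ ≤ ENNReal.ofReal (r ^ d) * η := by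
        gcongr
        exact hM m (by omega)
    _ = η * ENNReal.ofReal (r ^ d) := mul_comm _ _

end Euclidean

end DoubleLayerWiener

open DoubleLayerWiener in
theorem double_layer_wiener_general (d : ℕ) (b : EuclideanSpace ℝ (Fin d))
    (μ : Measure (EuclideanSpace ℝ (Fin d) × EuclideanSpace ℝ (Fin d))) [IsFiniteMeasure μ]
    (hV : μ {p | p.1 = b} = 0) (hH : μ {p | p.2 = b} = 0)
    (s t : ℝ) (hs : 0 < s) (ht : 0 < t) (hstd : s + t < d) (ε : ℝ) (hε : 0 < ε) :
    (∑' n : ℕ, (2 : ℝ≥0∞) ^ ((s + t) * ((n : ℝ) + 1)) *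
        rieszCap d (s + t) (annulus d b (n + 1) ∩
          {a | ENNReal.ofReal ε ≤ (ENNReal.ofReal (dist a b)) ^ (s + t) *
            ∫⁻ p, (ENNReal.ofReal (dist p.1 a)) ^ (-s) *
              (ENNReal.ofReal (dist p.2 a)) ^ (-t) ∂μ}) ≠ ⊤) ∧
    DensityZeroAt d
      {a | ENNReal.ofReal ε ≤ (ENNReal.ofReal (dist a b)) ^ (s + t) *
        ∫⁻ p, (ENNReal.ofReal (dist p.1 a)) ^ (-s) *
          (ENNReal.ofReal (dist p.2 a)) ^ (-t) ∂μ} b := by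
  obtain ⟨c, hc, hbound⟩ := exists_tsum_ne_top_and_measure_univ_le hV hH hs ht hε
  set S := fun n => annulus d b (n + 1) ∩ exceptionalSet μ b s t ε
  have htest : ∀ n (ν : Measure (EuclideanSpace ℝ (Fin d))), (∀ᵐ a ∂ν, a ∈ S n) →
      (∀ a, rieszPotential ν (s + t) a ≤ 1) →
      ν Set.univ ≤ ENNReal.ofReal (dyadicRadius n) ^ (s + t) * c n := fun n ν hν =>
    hbound n ν (hν.mono fun a ha => ⟨ha.2, mem_annulus_succ_iff.mp ha.1⟩)
  have hst : 0 < s + t := by positivity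
  have hstd' : s + t < Module.finrank ℝ (EuclideanSpace ℝ (Fin d)) := by
    rwa [finrank_euclideanSpace_fin]
  obtain ⟨C, hC, hvol⟩ := exists_measure_le_of_subset_closedBall volume hst.le hstd'
  refine ⟨tsum_two_rpow_mul_rieszCap_ne_top hc htest,
    densityZeroAt_of_volume_annulus_le (by exact_mod_cast hst.trans hstd) (c := fun n => C * c n)
      (by rw [ENNReal.tsum_mul_left]; finiteness) fun n => ?_⟩
  have h := hvol b (dyadicRadius_pos n)
    ((measurableSet_annulus b _).inter (measurableSet_exceptionalSet μ b s t ε))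
    (fun a ha => mem_closedBall.mpr (mem_annulus_succ_iff.mp ha.1).2) (htest n)
  rwa [finrank_euclideanSpace_fin] at h

/-- the double-layer Riesz potential estimate. If μ is a finite positive
measure on ℝ^d × ℝ^d with compact support and no mass on {b} × ℝ^d or ℝ^d × {b},
s, t > 0, s + t < d, ε > 0, then the set
E = {a : |a-b|^{s+t} ∫∫ dμ(x,y)/(|x-a|^s |y-a|^t) ≥ ε} satisfies
∑ 2^{(s+t)n} C_{s+t}(A_n(b) ∩ E) < ∞; in particular it has Lebesgue density zero at b. -/
theorem double_layer_wiener (d : ℕ) (b : EuclideanSpace ℝ (Fin d))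
    (μ : Measure (EuclideanSpace ℝ (Fin d) × EuclideanSpace ℝ (Fin d))) [IsFiniteMeasure μ]
    (hK : ∃ K, IsCompact K ∧ μ Kᶜ = 0)
    (hV : μ {p | p.1 = b} = 0) (hH : μ {p | p.2 = b} = 0)
    (s t : ℝ) (hs : 0 < s) (ht : 0 < t) (hstd : s + t < d) (ε : ℝ) (hε : 0 < ε) :
    (∑' n : ℕ, (2 : ℝ≥0∞) ^ ((s + t) * ((n : ℝ) + 1)) *
        rieszCap d (s + t) (annulus d b (n + 1) ∩
          {a | ENNReal.ofReal ε ≤ (ENNReal.ofReal (dist a b)) ^ (s + t) *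
            ∫⁻ p, (ENNReal.ofReal (dist p.1 a)) ^ (-s) *
              (ENNReal.ofReal (dist p.2 a)) ^ (-t) ∂μ}) ≠ ⊤) ∧
    DensityZeroAt d
      {a | ENNReal.ofReal ε ≤ (ENNReal.ofReal (dist a b)) ^ (s + t) *
        ∫⁻ p, (ENNReal.ofReal (dist p.1 a)) ^ (-s) *
          (ENNReal.ofReal (dist p.2 a)) ^ (-t) ∂μ} b :=
  double_layer_wiener_general d b μ hV hH s t hs ht hstd ε hε
end

section
/- Let b ∈ ℝ^d and let μ be a finite positive measure on ℝ^d × ℝ^d with compact support and no point mass at (b, b). Let s, t > 0, 0 < u < min(1, s, t), and s + t - u < d. Then for every ε > 0 the set E = {a : |a-b|^{s+t-u} · ∫∫ |x-y|^u dμ(x,y)/(|x-a|^s |y-a|^t) ≥ ε} has Lebesgue density zero at b. -/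
open MeasureTheory Metric Filter ENNReal

/-- The double-layer Riesz potential with kernel factor |x-y|^u. -/
noncomputable def doublePotential (d : ℕ) (s t u : ℝ)
    (μ : Measure (EuclideanSpace ℝ (Fin d) × EuclideanSpace ℝ (Fin d)))
    (a : EuclideanSpace ℝ (Fin d)) : ℝ≥0∞ :=
  ∫⁻ p, (ENNReal.ofReal (dist p.1 p.2)) ^ u *
    ((ENNReal.ofReal (dist p.1 a)) ^ (-s) * (ENNReal.ofReal (dist p.2 a)) ^ (-t)) ∂μ

/-!
Chebyshev's inequality on `closedBall b r` and Tonelli bound `|E ∩ B(b, r)| / r ^ d` by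
`ε⁻¹ ∫ r ^ (s + t - u - d) ∫_{B(b, r)} K(x, y, a) da dμ(x, y)`, where
`K(x, y, a) = |x - y| ^ u |x - a| ^ (-s) |y - a| ^ (-t)`. Since `|x - y| ≤ 2 max(|x - a|, |y - a|)`,
`K ≤ 2 ^ u (|x - a| ^ (-(s + t - u)) + |y - a| ^ (-(s + t - u)))`, and by scaling a Riesz kernel
of order `β < d` has mass `O(r ^ (d - β))` on any ball of radius `r`; so the inner term is bounded
uniformly in `(x, y)` and dominated convergence applies. For fixed `(x, y)` the inner term tends
to `0`: it vanishes on the diagonal because `u > 0`, and if, say, `x ≠ b`, then near `b` only the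
singularity at `y` is integrated, which leaves a factor `r ^ (s - u)`.
-/

open Module Topology

theorem ENNReal.rpow_le_rpow_of_nonpos {x y : ℝ≥0∞} (hxy : x ≤ y) {z : ℝ} (hz : z ≤ 0) :
    y ^ z ≤ x ^ z := by
  rw [← neg_neg z, rpow_neg y, rpow_neg x]
  exact ENNReal.inv_le_inv.mpr (rpow_le_rpow hxy (neg_nonneg.mpr hz))

section RieszKernel

variable {E : Type*} [NormedAddCommGroup E] [NormedSpace ℝ E] [FiniteDimensional ℝ E]
  [MeasurableSpace E] [BorelSpace E] (μ : Measure E) [μ.IsAddHaarMeasure]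

theorem setLIntegral_closedBall_edist_rpow (x : E) {r : ℝ} (hr : 0 < r) (β : ℝ) :
    ∫⁻ a in closedBall x r, edist x a ^ (-β) ∂μ =
      ENNReal.ofReal (r ^ ((finrank ℝ E : ℝ) - β)) *
        ∫⁻ z in closedBall (0 : E) 1, ‖z‖ₑ ^ (-β) ∂μ := by
  have himage : (fun z : E => x + r • z) '' closedBall 0 1 = closedBall x r := by
    rw [show (fun z : E => x + r • z) = (x + ·) ∘ (r • ·) from rfl, Set.image_comp,
      Set.image_smul, _root_.smul_closedBall _ _ zero_le_one]
    simp [abs_of_pos hr]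
  have hderiv : ∀ z ∈ closedBall (0 : E) 1, HasFDerivWithinAt (fun z : E => x + r • z)
      (r • ContinuousLinearMap.id ℝ E) (closedBall 0 1) z := fun z _ =>
    (((hasFDerivAt_id z).const_smul r).const_add x).hasFDerivWithinAt
  have hinj : Set.InjOn (fun z : E => x + r • z) (closedBall 0 1) := fun z _ w _ h => by
    simpa [hr.ne'] using h
  have hdet : (r • ContinuousLinearMap.id ℝ E).det = r ^ finrank ℝ E := by
    simp [ContinuousLinearMap.det, LinearMap.det_smul]
  rw [← himage, lintegral_image_eq_lintegral_abs_det_fderiv_mul μ measurableSet_closedBall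
    hderiv hinj, ← lintegral_const_mul' _ _ ofReal_ne_top]
  refine setLIntegral_congr_fun measurableSet_closedBall fun z _ => ?_
  rw [hdet, edist_eq_enorm_sub, sub_add_cancel_left, enorm_neg, enorm_smul,
    Real.enorm_eq_ofReal hr.le, mul_rpow_of_ne_top ofReal_ne_top enorm_ne_top,
    ofReal_rpow_of_pos hr, abs_of_pos (by positivity), ← mul_assoc, ← ofReal_mul (by positivity),
    ← Real.rpow_natCast, ← Real.rpow_add hr, sub_eq_add_neg]

theorem setLIntegral_closedBall_enorm_rpow_lt_top {β : ℝ} (hβ0 : 0 ≤ β)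
    (hβ : β < finrank ℝ E) :
    ∫⁻ z in closedBall (0 : E) 1, ‖z‖ₑ ^ (-β) ∂μ < ∞ := by
  have hdim : 1 ≤ finrank ℝ E := by exact_mod_cast hβ0.trans_lt hβ
  have : Nontrivial E := Module.nontrivial_of_finrank_pos (R := ℝ) hdim
  have hint : IntegrableOn (fun z : E => ‖z‖ ^ (-β)) (ball 0 2) μ :=
    integrableOn_ball_of_norm_le_rpow (C := 1) hdim hβ
      (Eventually.of_forall fun z => by simp [abs_of_nonneg, Real.rpow_nonneg])
      (measurable_norm.pow_const _).aestronglyMeasurable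
  -- the two integrands differ only at the origin, where `‖0‖ₑ ^ (-β) = ∞`
  have hae : ∀ᵐ z ∂μ.restrict (closedBall (0 : E) 1),
      ‖z‖ₑ ^ (-β) = ENNReal.ofReal (‖z‖ ^ (-β)) := by
    refine ae_restrict_of_ae ?_
    filter_upwards [compl_mem_ae_iff.mpr (measure_singleton (0 : E))] with z hz
    rw [← ofReal_norm, ofReal_rpow_of_pos (norm_pos_iff.mpr hz)]
  rw [lintegral_congr_ae hae]
  exact (hint.mono_set (closedBall_subset_ball one_lt_two)).setLIntegral_lt_top

theorem exists_setLIntegral_closedBall_edist_rpow_le {β : ℝ} (hβ0 : 0 ≤ β)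
    (hβ : β < finrank ℝ E) :
    ∃ C ≠ ∞, ∀ (x c : E) {r : ℝ}, 0 < r →
      ∫⁻ a in closedBall c r, edist x a ^ (-β) ∂μ ≤
        C * ENNReal.ofReal (r ^ ((finrank ℝ E : ℝ) - β)) := by
  set I := ∫⁻ z in closedBall (0 : E) 1, ‖z‖ₑ ^ (-β) ∂μ
  refine ⟨I + μ (closedBall 0 1), add_ne_top.mpr
    ⟨(setLIntegral_closedBall_enorm_rpow_lt_top μ hβ0 hβ).ne, measure_closedBall_lt_top.ne⟩,
    fun x c r hr => ?_⟩
  have hfar : ∀ a ∈ closedBall c r \ closedBall x r,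
      edist x a ^ (-β) ≤ ENNReal.ofReal (r ^ (-β)) := fun a ha => by
    rw [← ofReal_rpow_of_pos hr, edist_dist]
    refine rpow_le_rpow_of_nonpos (ofReal_le_ofReal ?_) (neg_nonpos.mpr hβ0)
    simpa [dist_comm] using (not_le.mp (mem_closedBall.not.mp ha.2)).le
  calc ∫⁻ a in closedBall c r, edist x a ^ (-β) ∂μ
      ≤ ∫⁻ a in closedBall x r, edist x a ^ (-β) ∂μ +
          ∫⁻ a in closedBall c r \ closedBall x r, edist x a ^ (-β) ∂μ :=
        (lintegral_mono_set le_sup_sdiff).trans (lintegral_union_le _ _ _)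
    _ ≤ ENNReal.ofReal (r ^ ((finrank ℝ E : ℝ) - β)) * I +
          ENNReal.ofReal (r ^ (-β)) * μ (closedBall c r) := by
        gcongr
        · exact (setLIntegral_closedBall_edist_rpow μ x hr β).le
        · exact (setLIntegral_mono' (measurableSet_closedBall.diff measurableSet_closedBall)
            hfar).trans ((setLIntegral_const _ _).trans_le (by gcongr; exact Set.sdiff_subset))
    _ = (I + μ (closedBall 0 1)) * ENNReal.ofReal (r ^ ((finrank ℝ E : ℝ) - β)) := by
        rw [μ.addHaar_closedBall' c hr.le, ← mul_assoc, ← ofReal_mul (by positivity),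
          ← Real.rpow_natCast, ← Real.rpow_add hr, neg_add_eq_sub]
        ring

end RieszKernel

section DoubleKernel

variable {X : Type*} [PseudoMetricSpace X] {s t u : ℝ}

noncomputable def doubleKernel (s t u : ℝ) (x y a : X) : ℝ≥0∞ :=
  edist x y ^ u * (edist x a ^ (-s) * edist y a ^ (-t))

theorem doubleKernel_comm (x y a : X) : doubleKernel s t u x y a = doubleKernel t s u y x a := by
  simp only [doubleKernel, edist_comm x y, mul_comm (edist x a ^ (-s))]

theorem doubleKernel_self (hu : 0 < u) (x a : X) : doubleKernel s t u x x a = 0 := by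
  simp [doubleKernel, hu]

theorem doubleKernel_le_of_edist_le (hs : 0 < s) (hu : 0 < u) (hut : u ≤ t) {x y a : X}
    (h : edist x a ≤ edist y a) :
    doubleKernel s t u x y a ≤ 2 ^ u * edist x a ^ (-(s + t - u)) := by
  rcases eq_or_ne (edist x a) 0 with hx0 | hx0
  · rw [hx0, zero_rpow_of_neg (by linarith), mul_top (by positivity)]
    exact le_top
  have hy0 : edist y a ≠ 0 := (pos_iff_ne_zero.mpr hx0).trans_le h |>.ne'
  calc doubleKernel s t u x y a
      = edist x y ^ u * (edist x a ^ (-s) * edist y a ^ (-t)) := rfl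
    _ ≤ (2 * edist y a) ^ u * (edist x a ^ (-s) * edist y a ^ (-t)) := by
        gcongr
        calc edist x y ≤ edist x a + edist y a := edist_triangle_right x y a
          _ ≤ 2 * edist y a := by rw [two_mul]; gcongr
    _ = 2 ^ u * (edist x a ^ (-s) * edist y a ^ (u - t)) := by
        rw [mul_rpow_of_nonneg _ _ hu.le, sub_eq_add_neg, rpow_add _ _ hy0 (edist_ne_top y a)]
        ring
    _ ≤ 2 ^ u * (edist x a ^ (-s) * edist x a ^ (u - t)) := by
        gcongr 2 ^ u * (_ * ?_)
        exact rpow_le_rpow_of_nonpos h (by linarith)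
    _ = 2 ^ u * edist x a ^ (-(s + t - u)) := by
        rw [← rpow_add _ _ hx0 (edist_ne_top x a)]
        ring_nf

theorem doubleKernel_le (hu : 0 < u) (hus : u ≤ s) (hut : u ≤ t) (x y a : X) :
    doubleKernel s t u x y a ≤
      2 ^ u * (edist x a ^ (-(s + t - u)) + edist y a ^ (-(s + t - u))) := by
  rcases le_total (edist x a) (edist y a) with h | h
  · exact (doubleKernel_le_of_edist_le (hu.trans_le hus) hu hut h).trans
      (by gcongr; exact le_self_add)
  · rw [doubleKernel_comm, show s + t - u = t + s - u by ring]
    exact (doubleKernel_le_of_edist_le (hu.trans_le hut) hu hus h).trans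
      (by gcongr; exact le_add_self)

theorem measurable_doubleKernel [MeasurableSpace X] [OpensMeasurableSpace X]
    [SecondCountableTopology X] :
    Measurable fun q : (X × X) × X => doubleKernel s t u q.1.1 q.1.2 q.2 := by
  unfold doubleKernel
  fun_prop

end DoubleKernel

theorem mul_measure_le_rpow_mul_setLIntegral {X : Type*} [PseudoMetricSpace X]
    [MeasurableSpace X] [OpensMeasurableSpace X] (μ : Measure X) {g : X → ℝ≥0∞}
    (hg : Measurable g) (c : ℝ≥0∞) {α : ℝ} (hα : 0 ≤ α) (b : X) {r : ℝ} (hr : 0 ≤ r) :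
    c * μ ({a | c ≤ edist a b ^ α * g a} ∩ closedBall b r) ≤
      ENNReal.ofReal (r ^ α) * ∫⁻ a in closedBall b r, g a ∂μ := by
  calc c * μ ({a | c ≤ edist a b ^ α * g a} ∩ closedBall b r)
      = c * μ.restrict (closedBall b r) {a | c ≤ edist a b ^ α * g a} := by
        rw [Measure.restrict_apply' measurableSet_closedBall]
    _ ≤ ∫⁻ a in closedBall b r, edist a b ^ α * g a ∂μ :=
        mul_meas_ge_le_lintegral₀ (by fun_prop) c
    _ ≤ ∫⁻ a in closedBall b r, ENNReal.ofReal (r ^ α) * g a ∂μ := by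
        refine setLIntegral_mono' measurableSet_closedBall fun a ha => ?_
        rw [← ofReal_rpow_of_nonneg hr hα, edist_dist]
        gcongr
        exact mem_closedBall.mp ha
    _ = ENNReal.ofReal (r ^ α) * ∫⁻ a in closedBall b r, g a ∂μ := lintegral_const_mul _ hg

section DoubleLayer

variable {E : Type*} [NormedAddCommGroup E] [NormedSpace ℝ E] [FiniteDimensional ℝ E]
  [MeasurableSpace E] [BorelSpace E] (μ : Measure E) [μ.IsAddHaarMeasure] {s t u : ℝ}

theorem exists_setLIntegral_doubleKernel_le (hu : 0 < u) (hus : u ≤ s) (hut : u ≤ t)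
    (hn : s + t - u < finrank ℝ E) :
    ∃ C ≠ ∞, ∀ (x y b : E) {r : ℝ}, 0 < r →
      ∫⁻ a in closedBall b r, doubleKernel s t u x y a ∂μ ≤
        C * ENNReal.ofReal (r ^ ((finrank ℝ E : ℝ) - (s + t - u))) := by
  obtain ⟨C, hC, hball⟩ :=
    exists_setLIntegral_closedBall_edist_rpow_le μ (β := s + t - u) (by linarith) hn
  refine ⟨2 ^ u * (C + C), by finiteness, fun x y b r hr => ?_⟩
  calc ∫⁻ a in closedBall b r, doubleKernel s t u x y a ∂μ
      ≤ ∫⁻ a in closedBall b r, 2 ^ u *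
          (edist x a ^ (-(s + t - u)) + edist y a ^ (-(s + t - u))) ∂μ :=
        lintegral_mono fun a => doubleKernel_le hu hus hut x y a
    _ = 2 ^ u * (∫⁻ a in closedBall b r, edist x a ^ (-(s + t - u)) ∂μ +
          ∫⁻ a in closedBall b r, edist y a ^ (-(s + t - u)) ∂μ) := by
        rw [lintegral_const_mul' _ _ (by finiteness), lintegral_add_left (by fun_prop)]
    _ ≤ 2 ^ u * (C * ENNReal.ofReal (r ^ ((finrank ℝ E : ℝ) - (s + t - u))) +
          C * ENNReal.ofReal (r ^ ((finrank ℝ E : ℝ) - (s + t - u)))) := by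
        gcongr <;> exact hball _ b hr
    _ = 2 ^ u * (C + C) * ENNReal.ofReal (r ^ ((finrank ℝ E : ℝ) - (s + t - u))) := by ring

theorem tendsto_rpow_mul_setLIntegral_doubleKernel_of_ne (hu : 0 ≤ u) (hus : u < s)
    (ht : 0 ≤ t) (htn : t < finrank ℝ E) {x b : E} (hxb : x ≠ b) (y : E) :
    Tendsto (fun r => ENNReal.ofReal (r ^ (s + t - u - finrank ℝ E)) *
      ∫⁻ a in closedBall b r, doubleKernel s t u x y a ∂μ) (𝓝[>] 0) (𝓝 0) := by
  obtain ⟨C, hC, hball⟩ := exists_setLIntegral_closedBall_edist_rpow_le μ ht htn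
  set δ := dist x b / 2 with hδx
  have hδ : 0 < δ := half_pos (dist_pos.mpr hxb)
  set M := edist x y ^ u * ENNReal.ofReal δ ^ (-s) * C
  have hM : M ≠ ∞ := by finiteness
  have hlim : Tendsto (fun r : ℝ => M * ENNReal.ofReal (r ^ (s - u))) (𝓝[>] 0) (𝓝 0) := by
    have h := (Real.continuousAt_rpow_const 0 (s - u) (Or.inr (by linarith))).tendsto
    rw [Real.zero_rpow (by linarith)] at h
    simpa using ENNReal.Tendsto.const_mul
      ((ENNReal.tendsto_ofReal h).mono_left nhdsWithin_le_nhds) (Or.inr hM)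
  refine tendsto_of_tendsto_of_tendsto_of_le_of_le' tendsto_const_nhds hlim
    (Eventually.of_forall fun r => zero_le) ?_
  filter_upwards [Ioo_mem_nhdsGT hδ] with r ⟨hr, hrδ⟩
  have hkernel : ∀ a ∈ closedBall b r, doubleKernel s t u x y a ≤
      edist x y ^ u * ENNReal.ofReal δ ^ (-s) * edist y a ^ (-t) := fun a ha => by
    have hxa : ENNReal.ofReal δ ≤ edist x a := by
      rw [edist_dist]
      refine ofReal_le_ofReal ?_
      linarith [dist_triangle x a b, mem_closedBall.mp ha, dist_comm a x]
    calc doubleKernel s t u x y a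
        = edist x y ^ u * (edist x a ^ (-s) * edist y a ^ (-t)) := rfl
      _ ≤ edist x y ^ u * (ENNReal.ofReal δ ^ (-s) * edist y a ^ (-t)) := by
        gcongr edist x y ^ u * (?_ * _)
        exact rpow_le_rpow_of_nonpos hxa (by linarith)
      _ = _ := by ring
  calc ENNReal.ofReal (r ^ (s + t - u - finrank ℝ E)) *
        ∫⁻ a in closedBall b r, doubleKernel s t u x y a ∂μ
      ≤ ENNReal.ofReal (r ^ (s + t - u - finrank ℝ E)) * (edist x y ^ u *
          ENNReal.ofReal δ ^ (-s) * ∫⁻ a in closedBall b r, edist y a ^ (-t) ∂μ) := by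
        gcongr _ * ?_
        rw [← lintegral_const_mul' _ _ (by finiteness)]
        exact setLIntegral_mono' measurableSet_closedBall hkernel
    _ ≤ ENNReal.ofReal (r ^ (s + t - u - finrank ℝ E)) * (edist x y ^ u *
          ENNReal.ofReal δ ^ (-s) * (C * ENNReal.ofReal (r ^ ((finrank ℝ E : ℝ) - t)))) := by
        gcongr
        exact hball y b hr
    _ = M * (ENNReal.ofReal (r ^ (s + t - u - finrank ℝ E)) *
          ENNReal.ofReal (r ^ ((finrank ℝ E : ℝ) - t))) := by ring
    _ = M * ENNReal.ofReal (r ^ (s - u)) := by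
        rw [← ofReal_mul (by positivity), ← Real.rpow_add hr]
        ring_nf

theorem tendsto_rpow_mul_setLIntegral_doubleKernel (hu : 0 < u) (hus : u < s) (hut : u < t)
    (hn : s + t - u < finrank ℝ E) (b x y : E) :
    Tendsto (fun r => ENNReal.ofReal (r ^ (s + t - u - finrank ℝ E)) *
      ∫⁻ a in closedBall b r, doubleKernel s t u x y a ∂μ) (𝓝[>] 0) (𝓝 0) := by
  by_cases hx : x = b
  · by_cases hy : y = b
    · simp [hx, hy, doubleKernel_self hu]
    · simp_rw [doubleKernel_comm (s := s), show s + t - u = t + s - u by ring]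
      exact tendsto_rpow_mul_setLIntegral_doubleKernel_of_ne μ hu.le hut (by linarith)
        (by linarith) hy x
  · exact tendsto_rpow_mul_setLIntegral_doubleKernel_of_ne μ hu.le hus (by linarith)
      (by linarith) hx y

variable (ν : Measure (E × E)) [IsFiniteMeasure ν]

theorem tendsto_rpow_mul_lintegral_setLIntegral_doubleKernel (hu : 0 < u) (hus : u < s)
    (hut : u < t) (hn : s + t - u < finrank ℝ E) (b : E) :
    Tendsto (fun r => ENNReal.ofReal (r ^ (s + t - u - finrank ℝ E)) *
      ∫⁻ p, ∫⁻ a in closedBall b r, doubleKernel s t u p.1 p.2 a ∂μ ∂ν) (𝓝[>] 0) (𝓝 0) := by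
  obtain ⟨C, hC, hbound⟩ := exists_setLIntegral_doubleKernel_le μ hu hus.le hut.le hn
  have hdominated : ∀ᶠ r in 𝓝[>] (0 : ℝ), ∀ᵐ p ∂ν,
      ENNReal.ofReal (r ^ (s + t - u - finrank ℝ E)) *
        ∫⁻ a in closedBall b r, doubleKernel s t u p.1 p.2 a ∂μ ≤ C := by
    filter_upwards [self_mem_nhdsWithin] with r (hr : 0 < r)
    refine Eventually.of_forall fun p => ?_
    calc ENNReal.ofReal (r ^ (s + t - u - finrank ℝ E)) *
          ∫⁻ a in closedBall b r, doubleKernel s t u p.1 p.2 a ∂μ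
        ≤ ENNReal.ofReal (r ^ (s + t - u - finrank ℝ E)) *
            (C * ENNReal.ofReal (r ^ ((finrank ℝ E : ℝ) - (s + t - u)))) := by
          gcongr
          exact hbound p.1 p.2 b hr
      _ = C := by
          rw [mul_left_comm, ← ofReal_mul (by positivity), ← Real.rpow_add hr]
          simp
  refine Tendsto.congr (fun r => lintegral_const_mul' _ _ ofReal_ne_top) ?_
  simpa using tendsto_lintegral_filter_of_dominated_convergence (fun _ => C)
    (Eventually.of_forall fun r => (measurable_doubleKernel.lintegral_prod_right').const_mul _)
    hdominated (by simpa using mul_ne_top hC (measure_ne_top ν _))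
    (Eventually.of_forall fun p =>
      tendsto_rpow_mul_setLIntegral_doubleKernel μ hu hus hut hn b p.1 p.2)

theorem tendsto_measure_superlevel_inter_closedBall_div (hu : 0 < u) (hus : u < s)
    (hut : u < t) (hn : s + t - u < finrank ℝ E) (b : E) {c : ℝ≥0∞} (hc : c ≠ 0) (hc' : c ≠ ∞) :
    Tendsto (fun r => μ ({a | c ≤ edist a b ^ (s + t - u) *
        ∫⁻ p, doubleKernel s t u p.1 p.2 a ∂ν} ∩ closedBall b r) /
      ENNReal.ofReal (r ^ finrank ℝ E)) (𝓝[>] 0) (𝓝 0) := by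
  have hK : Measurable fun q : (E × E) × E => doubleKernel s t u q.1.1 q.1.2 q.2 :=
    measurable_doubleKernel
  have hlim := ENNReal.Tendsto.const_mul
    (tendsto_rpow_mul_lintegral_setLIntegral_doubleKernel μ ν hu hus hut hn b)
    (Or.inr (inv_ne_top.mpr hc))
  rw [mul_zero] at hlim
  refine tendsto_of_tendsto_of_tendsto_of_le_of_le' tendsto_const_nhds hlim
    (Eventually.of_forall fun r => zero_le) ?_
  filter_upwards [self_mem_nhdsWithin] with r (hr : 0 < r)
  have hcheb := mul_measure_le_rpow_mul_setLIntegral μ (hK.lintegral_prod_left' (μ := ν)) c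
    (α := s + t - u) (by linarith) b hr.le
  dsimp only at hcheb
  rw [lintegral_lintegral_swap (f := fun (a : E) (p : E × E) => doubleKernel s t u p.1 p.2 a)
    (hK.comp measurable_swap).aemeasurable] at hcheb
  have hpow : ENNReal.ofReal (r ^ (s + t - u)) / ENNReal.ofReal (r ^ finrank ℝ E) =
      ENNReal.ofReal (r ^ (s + t - u - finrank ℝ E)) := by
    rw [← ofReal_div_of_pos (by positivity), Real.rpow_sub hr (s + t - u), Real.rpow_natCast]
  calc _ ≤ c⁻¹ * (ENNReal.ofReal (r ^ (s + t - u)) *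
          ∫⁻ p, ∫⁻ a in closedBall b r, doubleKernel s t u p.1 p.2 a ∂μ ∂ν) /
        ENNReal.ofReal (r ^ finrank ℝ E) := by
        gcongr
        exact (ENNReal.mul_le_iff_le_inv hc hc').mp hcheb
    _ = _ := by
        rw [← hpow, div_eq_mul_inv, div_eq_mul_inv]
        ring

end DoubleLayer

theorem double_layer_density_zero_general (d : ℕ) (b : EuclideanSpace ℝ (Fin d))
    (μ : Measure (EuclideanSpace ℝ (Fin d) × EuclideanSpace ℝ (Fin d))) [IsFiniteMeasure μ]
    (s t u : ℝ) (hu0 : 0 < u) (hu : u < min 1 (min s t))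
    (hstd : s + t - u < d) (ε : ℝ) (hε : 0 < ε) :
    DensityZeroAt d
      {a | ENNReal.ofReal ε ≤ (ENNReal.ofReal (dist a b)) ^ (s + t - u) *
        doublePotential d s t u μ a} b := by
  have hus : u < s := hu.trans_le ((min_le_right _ _).trans (min_le_left _ _))
  have hut : u < t := hu.trans_le ((min_le_right _ _).trans (min_le_right _ _))
  have h := tendsto_measure_superlevel_inter_closedBall_div volume μ hu0 hus hut
    (by simpa using hstd) b (ofReal_pos.mpr hε).ne' ofReal_ne_top
  simpa [DensityZeroAt, doublePotential, doubleKernel, edist_dist] using h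

/-- if μ has compact support and no point mass at (b,b) (but may charge
the slices through b), s, t > 0, 0 < u < min(1,s,t), s+t-u < d, then for every ε > 0
the set E = {a : |a-b|^{s+t-u} ∫∫ |x-y|^u dμ(x,y)/(|x-a|^s |y-a|^t) ≥ ε}
has Lebesgue density zero at b. -/
theorem double_layer_density_zero (d : ℕ) (b : EuclideanSpace ℝ (Fin d))
    (μ : Measure (EuclideanSpace ℝ (Fin d) × EuclideanSpace ℝ (Fin d))) [IsFiniteMeasure μ]
    (hK : ∃ K, IsCompact K ∧ μ Kᶜ = 0)
    (hbb : μ {(b, b)} = 0)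
    (s t u : ℝ) (hs : 0 < s) (ht : 0 < t) (hu0 : 0 < u) (hu : u < min 1 (min s t))
    (hstd : s + t - u < d) (ε : ℝ) (hε : 0 < ε) :
    DensityZeroAt d
      {a | ENNReal.ofReal ε ≤ (ENNReal.ofReal (dist a b)) ^ (s + t - u) *
        doublePotential d s t u μ a} b :=
  double_layer_density_zero_general d b μ s t u hu0 hu hstd ε hε
end

section
/- Let X ⊆ ℂ be compact, b ∈ X, 0 < α < 1, and let μ be a complex measure on X × X with no mass on the diagonal. Then there exists a complex measure μ' on X × X, with no mass on the diagonal and no mass on the vertical slice {b} × X, such that L(μ') = L(μ) as functionals on lip α, where L(ν)(f) = ∫∫ (f(z)-f(w))/|z-w|^α dν(z,w). -/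
open MeasureTheory Metric Filter ENNReal
open Complex Topology

/-!
Encode a complex measure as a pair `(σ, h)` of a finite measure and a unimodular density. Let `μ₂`
be the part of `μ` on the slice `S = {b} × X` and `μ₁ = μ - μ₂`. The kernel is antisymmetric under
`R (z, w) = (w, z)`, so `μ₁ - R_♯μ₂` induces the same functional as `μ`. It charges neither `S` nor
the diagonal, since `R_♯μ₂` lives on `X × {b}`, which meets `S` only on the diagonal. The two parts
overlap on `X × {b}`, so to write their difference as a pair again one takes densities with respect
to their sum and then the polar decomposition of the combined density.
-/

/-- `f` is a bounded little-Lipschitz-α function on ℂ. -/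
def LipAlpha (α : ℝ) (f : ℂ → ℂ) : Prop :=
  (∃ C, ∀ z, ‖f z‖ ≤ C) ∧
  (∃ C, ∀ z w, ‖f z - f w‖ ≤ C * ‖z - w‖ ^ α) ∧
  (∀ ε > 0, ∃ δ > 0, ∀ z w, ‖z - w‖ < δ → ‖f z - f w‖ ≤ ε * ‖z - w‖ ^ α)

section Densities

variable {Ω : Type*} [MeasurableSpace Ω]

theorem exists_unimodular_density_of_integrable {τ : Measure Ω} {d : Ω → ℂ}
    (hdm : Measurable d) (hd : Integrable d τ) :
    ∃ (σ : Measure Ω) (_ : IsFiniteMeasure σ) (h : Ω → ℂ), σ ≪ τ ∧ Measurable h ∧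
      (∀ x, ‖h x‖ = 1) ∧ ∀ g : Ω → ℂ, ∫ x, g x * h x ∂σ = ∫ x, g x * d x ∂τ := by
  refine ⟨τ.withDensity fun x => ‖d x‖₊, isFiniteMeasure_withDensity hd.2.ne,
    fun x => exp (arg (d x) * I), withDensity_absolutelyContinuous _ _,
    by fun_prop, fun x => norm_exp_ofReal_mul_I _, fun g => ?_⟩
  rw [integral_withDensity_eq_integral_smul hdm.nnnorm]
  refine integral_congr_ae (ae_of_all _ fun x => ?_)
  dsimp only
  rw [NNReal.smul_def, coe_nnnorm, real_smul, mul_left_comm, norm_mul_exp_arg_mul_I]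

theorem exists_integrable_density_add (ν₁ ν₂ : Measure Ω) [SigmaFinite ν₁] [SigmaFinite ν₂]
    {h₁ h₂ : Ω → ℂ} (hh₁ : Measurable h₁) (hh₂ : Measurable h₂)
    (hi₁ : Integrable h₁ ν₁) (hi₂ : Integrable h₂ ν₂) :
    ∃ d : Ω → ℂ, Measurable d ∧ Integrable d (ν₁ + ν₂) ∧
      ∀ g : Ω → ℂ, Integrable (fun x => g x * h₁ x) ν₁ → Integrable (fun x => g x * h₂ x) ν₂ →
        ∫ x, g x * h₁ x ∂ν₁ + ∫ x, g x * h₂ x ∂ν₂ = ∫ x, g x * d x ∂(ν₁ + ν₂) := by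
  have hac₁ : ν₁ ≪ ν₁ + ν₂ := Measure.absolutelyContinuous_of_le (Measure.le_add_right le_rfl)
  have hac₂ : ν₂ ≪ ν₁ + ν₂ := Measure.absolutelyContinuous_of_le (Measure.le_add_left le_rfl)
  refine ⟨fun x => (ν₁.rnDeriv (ν₁ + ν₂) x).toReal • h₁ x +
    (ν₂.rnDeriv (ν₁ + ν₂) x).toReal • h₂ x, by fun_prop,
    ((integrable_rnDeriv_smul_iff hac₁).2 hi₁).add ((integrable_rnDeriv_smul_iff hac₂).2 hi₂),
    fun g hg₁ hg₂ => ?_⟩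
  rw [← integral_rnDeriv_smul hac₁, ← integral_rnDeriv_smul hac₂,
    ← integral_add ((integrable_rnDeriv_smul_iff hac₁).2 hg₁)
      ((integrable_rnDeriv_smul_iff hac₂).2 hg₂)]
  refine integral_congr_ae (ae_of_all _ fun x => ?_)
  simp only [mul_add, mul_smul_comm]

end Densities

/-- The kernel of the functional `L`. -/
noncomputable def holderQuotient (α : ℝ) (f : ℂ → ℂ) (p : ℂ × ℂ) : ℂ :=
  (f p.1 - f p.2) / (‖p.1 - p.2‖ ^ α : ℝ)

theorem holderQuotient_swap (α : ℝ) (f : ℂ → ℂ) (p : ℂ × ℂ) :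
    holderQuotient α f p.swap = -holderQuotient α f p := by
  rw [holderQuotient, holderQuotient, Prod.fst_swap, Prod.snd_swap, norm_sub_rev, ← neg_div,
    neg_sub]

theorem norm_holderQuotient_le {α C : ℝ} {f : ℂ → ℂ}
    (hC : ∀ z w, ‖f z - f w‖ ≤ C * ‖z - w‖ ^ α) (p : ℂ × ℂ) :
    ‖holderQuotient α f p‖ ≤ |C| := by
  rcases (Real.rpow_nonneg (norm_nonneg (p.1 - p.2)) α).eq_or_lt with hzero | hpos
  · simp [holderQuotient, ← hzero]
  · rw [holderQuotient, norm_div, norm_real, Real.norm_of_nonneg hpos.le, div_le_iff₀ hpos]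
    exact (hC p.1 p.2).trans (mul_le_mul_of_nonneg_right (le_abs_self C) hpos.le)

theorem measurable_holderQuotient (α : ℝ) {f : ℂ → ℂ} (hf : Measurable f) :
    Measurable (holderQuotient α f) := by
  unfold holderQuotient
  fun_prop

namespace LipAlpha

variable {α : ℝ} {f : ℂ → ℂ}

theorem continuous (hα : 0 < α) (hf : LipAlpha α f) : Continuous f := by
  obtain ⟨-, ⟨C, hC⟩, -⟩ := hf
  refine continuous_iff_continuousAt.2 fun z => tendsto_iff_norm_sub_tendsto_zero.2 ?_
  have hbound : Tendsto (fun w : ℂ => C * ‖w - z‖ ^ α) (𝓝 z) (𝓝 0) := by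
    have : Continuous fun w : ℂ => C * ‖w - z‖ ^ α := by fun_prop (disch := exact hα.le)
    simpa [Real.zero_rpow hα.ne'] using this.tendsto z
  exact squeeze_zero (fun _ => norm_nonneg _) (fun w => hC w z) hbound

theorem integrable_holderQuotient_mul (hα : 0 < α) (hf : LipAlpha α f)
    (μ : Measure (ℂ × ℂ)) [IsFiniteMeasure μ] {k : ℂ × ℂ → ℂ} (hk : Measurable k)
    (hk_le : ∀ p, ‖k p‖ ≤ 1) :
    Integrable (fun p => holderQuotient α f p * k p) μ := by
  obtain ⟨C, hC⟩ := hf.2.1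
  refine .of_bound ((measurable_holderQuotient α (hf.continuous hα).measurable).mul hk
    ).aestronglyMeasurable (|C| * 1) (ae_of_all _ fun p => ?_)
  rw [norm_mul]
  exact mul_le_mul (norm_holderQuotient_le hC p) (hk_le p) (norm_nonneg _) (abs_nonneg C)

end LipAlpha

section Reflection

variable {Ω : Type*} [MeasurableSpace Ω]

theorem measurableEmbedding_swap {β : Type*} [MeasurableSpace β] :
    MeasurableEmbedding (Prod.swap : Ω × β → β × Ω) :=
  MeasurableEquiv.prodComm.measurableEmbedding

/-- The measure `|μ₁| + R_♯|μ₂|`, which carries `μ₁ - R_♯μ₂`. -/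
noncomputable def reflectSlice (σ : Measure (Ω × Ω)) (b : Ω) : Measure (Ω × Ω) :=
  σ.restrict {p | p.1 = b}ᶜ + (σ.restrict {p | p.1 = b}).map Prod.swap

theorem reflectSlice_apply_eq_zero {σ : Measure (Ω × Ω)} {A : Set (Ω × Ω)} (b : Ω)
    (hA : σ A = 0) (hA_swap : σ (Prod.swap ⁻¹' A) = 0) : reflectSlice σ b A = 0 := by
  rw [reflectSlice, Measure.add_apply, measurableEmbedding_swap.map_apply,
    Measure.absolutelyContinuous_restrict hA, zero_add]
  exact Measure.absolutelyContinuous_restrict hA_swap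

theorem reflectSlice_slice_eq_zero [MeasurableSingletonClass Ω] {σ : Measure (Ω × Ω)}
    (hdiag : σ {p | p.1 = p.2} = 0) (b : Ω) : reflectSlice σ b {p | p.1 = b} = 0 := by
  have hS : MeasurableSet {p : Ω × Ω | p.1 = b} := measurable_fst (measurableSet_singleton b)
  rw [reflectSlice, Measure.add_apply, measurableEmbedding_swap.map_apply,
    Measure.restrict_apply' hS.compl, Measure.restrict_apply' hS, Set.inter_compl_self,
    measure_empty, zero_add]
  exact measure_mono_null (fun p hp => hp.2.trans hp.1.symm) hdiag

theorem integral_eq_restrict_compl_add_map_swap {K h : Ω × Ω → ℂ} (hK : ∀ p, K p.swap = -K p)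
    {σ : Measure (Ω × Ω)} {S : Set (Ω × Ω)} (hS : MeasurableSet S)
    (hint : Integrable (fun p => K p * h p) σ) :
    ∫ p, K p * h p ∂σ =
      ∫ p in Sᶜ, K p * h p ∂σ + ∫ p, K p * -h p.swap ∂(σ.restrict S).map Prod.swap := by
  rw [measurableEmbedding_swap.integral_map, ← integral_add_compl hS hint, add_comm]
  simp only [hK, Prod.swap_swap, neg_mul_neg]

end Reflection

theorem avoid_vertical_slice_general (α : ℝ) (hα0 : 0 < α)
    (X : Set ℂ) (b : ℂ)
    (σ : Measure (ℂ × ℂ)) [IsFiniteMeasure σ] (hsupp : σ ((X ×ˢ X)ᶜ) = 0)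
    (h : ℂ × ℂ → ℂ) (hmeas : Measurable h) (hone : ∀ p, ‖h p‖ = 1)
    (hdiag : σ {p : ℂ × ℂ | p.1 = p.2} = 0) :
    ∃ (σ' : Measure (ℂ × ℂ)) (_ : IsFiniteMeasure σ') (h' : ℂ × ℂ → ℂ),
      Measurable h' ∧ (∀ p, ‖h' p‖ = 1) ∧
      σ' ((X ×ˢ X)ᶜ) = 0 ∧
      σ' {p : ℂ × ℂ | p.1 = p.2} = 0 ∧
      σ' {p : ℂ × ℂ | p.1 = b} = 0 ∧
      ∀ f : ℂ → ℂ, LipAlpha α f →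
        ∫ p : ℂ × ℂ, ((f p.1 - f p.2) / (‖p.1 - p.2‖ ^ α : ℝ)) * h p ∂σ =
        ∫ p : ℂ × ℂ, ((f p.1 - f p.2) / (‖p.1 - p.2‖ ^ α : ℝ)) * h' p ∂σ' := by
  have hh_le : ∀ p, ‖h p‖ ≤ 1 := fun p => (hone p).le
  have hh_swap_le : ∀ p : ℂ × ℂ, ‖-h p.swap‖ ≤ 1 := fun p => by rw [norm_neg, hone]
  have hh_swap : Measurable fun p : ℂ × ℂ => -h p.swap := (hmeas.comp measurable_swap).neg
  obtain ⟨d, hdm, hdi, hL⟩ := exists_integrable_density_add (σ.restrict {p | p.1 = b}ᶜ)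
    ((σ.restrict {p | p.1 = b}).map Prod.swap) hmeas hh_swap
    (.of_bound hmeas.aestronglyMeasurable 1 (ae_of_all _ hh_le))
    (.of_bound hh_swap.aestronglyMeasurable 1 (ae_of_all _ hh_swap_le))
  obtain ⟨σ', hσ', h', hac, hh'm, hh'one, hL'⟩ := exists_unimodular_density_of_integrable hdm hdi
  refine ⟨σ', hσ', h', hh'm, hh'one, hac (reflectSlice_apply_eq_zero b hsupp ?_),
    hac (reflectSlice_apply_eq_zero b hdiag (measure_mono_null (fun p hp => hp.symm) hdiag)),
    hac (reflectSlice_slice_eq_zero hdiag b), fun f hf => ?_⟩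
  · rwa [Set.preimage_compl, Set.preimage_swap_prod]
  have hint := hf.integrable_holderQuotient_mul hα0
  calc ∫ p, holderQuotient α f p * h p ∂σ
      = ∫ p in {p | p.1 = b}ᶜ, holderQuotient α f p * h p ∂σ
          + ∫ p, holderQuotient α f p * -h p.swap ∂(σ.restrict {p | p.1 = b}).map Prod.swap :=
        integral_eq_restrict_compl_add_map_swap (holderQuotient_swap α f)
          (measurable_fst (measurableSet_singleton b)) (hint σ hmeas hh_le)
    _ = ∫ p, holderQuotient α f p * d p ∂reflectSlice σ b :=
        hL _ (hint _ hmeas hh_le) (hint _ hh_swap hh_swap_le)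
    _ = ∫ p, holderQuotient α f p * h' p ∂σ' := (hL' _).symm

/-- a complex measure μ on X × X with no mass on the diagonal
(encoded by its total variation σ and unimodular density h) can be replaced by a
measure μ'\'' (encoded by σ'\'', h'\'') with no mass on the diagonal and none on the
vertical slice {b} × X, inducing the same functional L on lip α. -/
theorem avoid_vertical_slice (α : ℝ) (hα0 : 0 < α) (hα1 : α < 1)
    (X : Set ℂ) (hX : IsCompact X) (b : ℂ) (hb : b ∈ X)
    (σ : Measure (ℂ × ℂ)) [IsFiniteMeasure σ] (hsupp : σ ((X ×ˢ X)ᶜ) = 0)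
    (h : ℂ × ℂ → ℂ) (hmeas : Measurable h) (hone : ∀ p, ‖h p‖ = 1)
    (hdiag : σ {p : ℂ × ℂ | p.1 = p.2} = 0) :
    ∃ (σ' : Measure (ℂ × ℂ)) (_ : IsFiniteMeasure σ') (h' : ℂ × ℂ → ℂ),
      Measurable h' ∧ (∀ p, ‖h' p‖ = 1) ∧
      σ' ((X ×ˢ X)ᶜ) = 0 ∧
      σ' {p : ℂ × ℂ | p.1 = p.2} = 0 ∧
      σ' {p : ℂ × ℂ | p.1 = b} = 0 ∧
      ∀ f : ℂ → ℂ, LipAlpha α f →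
        ∫ p : ℂ × ℂ, ((f p.1 - f p.2) / (‖p.1 - p.2‖ ^ α : ℝ)) * h p ∂σ =
        ∫ p : ℂ × ℂ, ((f p.1 - f p.2) / (‖p.1 - p.2‖ ^ α : ℝ)) * h' p ∂σ' :=
  avoid_vertical_slice_general α hα0 X b σ hsupp h hmeas hone hdiag
end

section
/- Let 0 < α < 1, X ⊆ ℂ compact, b ∈ X, and let μ be a finite complex measure on X × X with no mass at the point (b,b). Then for every δ > 0, the set E = {a ∈ ℂ : |a-b|^{1+α} · ∫∫ |z-w|^{1-α}/(|z-a||w-a|) d|μ|(z,w) < δ} has full area density at b, i.e. L²(E ∩ B(b,r))/(π r²) → 1 as r ↓ 0. -/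
open MeasureTheory Metric Filter ENNReal

/-- `E` has full area density at `b`. -/
def FullAreaDensityAt (E : Set ℂ) (b : ℂ) : Prop :=
  Tendsto (fun r : ℝ => volume (E ∩ closedBall b r) / ENNReal.ofReal (Real.pi * r ^ 2))
    (nhdsWithin 0 (Set.Ioi 0)) (nhds 1)

/-- The potential H̃(μ)(a) = ∫∫ |z-w|^{1-α} / (|z-a||w-a|) d|μ|(z,w), where σ
plays the role of the total variation |μ|. -/
noncomputable def Htilde (α : ℝ) (σ : Measure (ℂ × ℂ)) (a : ℂ) : ℝ≥0∞ :=
  ∫⁻ p, (ENNReal.ofReal (dist p.1 p.2)) ^ (1 - α) *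
    ((ENNReal.ofReal (dist p.1 a))⁻¹ * (ENNReal.ofReal (dist p.2 a))⁻¹) ∂σ

/-! Put `f a = |a - b| ^ (1 + α) H̃(a)`. By Chebyshev's inequality it suffices that the mean of
`f` over the disc `B(b, r)` tends to `0`; by Tonelli this mean is `∫ m_r dσ`, where `m_r (z, w)`
is the mean over `B(b, r)` of `|a - b| ^ (1 + α) |z - w| ^ (1 - α) / (|z - a| |w - a|)`.
Since `|z - w| ≤ 2 max (|z - a|, |w - a|)`, this integrand is at most
`2 |a - b| ^ (1 + α) (|z - a| ^ (-1-α) + |w - a| ^ (-1-α))`, and by scaling the mean of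
`|z - a| ^ (-c)` over a disc of radius `r` is `O(r ^ (-c))` uniformly in `z` for `c < 2`; so
`m_r` is bounded uniformly in `r` and `(z, w)`. If `z ≠ b`, then `|z - a|` stays away from `0`
and `m_r (z, w) = O(r ^ α)`. As `σ` is finite and `σ {(b, b)} = 0`, dominated convergence gives
`∫ m_r dσ → 0`. -/

open Set Module Topology

section AddHaar

variable {E : Type*} [NormedAddCommGroup E] [NormedSpace ℝ E] [FiniteDimensional ℝ E]
  [MeasurableSpace E] [BorelSpace E] (μ : Measure E) [μ.IsAddHaarMeasure]

lemma setLIntegral_unitClosedBall_rpow_neg_norm_lt_top {c : ℝ} (hc0 : 0 ≤ c)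
    (hc : c < finrank ℝ E) :
    ∫⁻ x in closedBall (0 : E) 1, ENNReal.ofReal ‖x‖ ^ (-c) ∂μ < ∞ := by
  have hd : 1 ≤ finrank ℝ E := by exact_mod_cast hc0.trans_lt hc
  have : Nontrivial E := Module.nontrivial_of_finrank_pos (R := ℝ) hd
  have hint : IntegrableOn (fun x : E ↦ ‖x‖ ^ (-c)) (ball 0 2) μ :=
    integrableOn_ball_of_norm_le_rpow (C := 1) hd hc
      (ae_of_all _ fun x ↦ by simp [abs_of_nonneg (Real.rpow_nonneg (norm_nonneg x) _)])
      (measurable_norm.pow_const _).aestronglyMeasurable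
  refine lt_of_le_of_lt ?_ hint.setLIntegral_lt_top
  refine (lintegral_mono_set (closedBall_subset_ball one_lt_two)).trans
    (setLIntegral_mono_ae' measurableSet_ball ?_)
  -- the extended-real and real powers of `‖x‖` can differ only at the null point `x = 0`
  filter_upwards [measure_singleton (μ := μ) (0 : E) |> compl_mem_ae_iff.mpr] with x hx _
  rw [ENNReal.ofReal_rpow_of_pos (norm_pos_iff.mpr hx)]

lemma lintegral_comp_smul (f : E → ℝ≥0∞) {R : ℝ} (hR : R ≠ 0) :
    ∫⁻ x, f (R • x) ∂μ = ENNReal.ofReal |(R ^ finrank ℝ E)⁻¹| * ∫⁻ x, f x ∂μ := by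
  rw [← smul_eq_mul, ← lintegral_smul_measure, ← Measure.map_addHaar_smul μ hR]
  exact (lintegral_map_equiv f (Homeomorph.smulOfNeZero R hR).toMeasurableEquiv).symm

lemma setLIntegral_closedBall_rpow_neg_dist_eq (c : ℝ) (z : E) {r : ℝ} (hr : 0 < r) :
    ∫⁻ a in closedBall z r, ENNReal.ofReal (dist z a) ^ (-c) ∂μ =
      ENNReal.ofReal r ^ (finrank ℝ E - c) *
        ∫⁻ x in closedBall (0 : E) 1, ENNReal.ofReal ‖x‖ ^ (-c) ∂μ := by
  set g : E → ℝ≥0∞ := fun x ↦ ENNReal.ofReal ‖x‖ ^ (-c)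
  have hr0 : ENNReal.ofReal r ≠ 0 := (ENNReal.ofReal_pos.2 hr).ne'
  have htrans : ∫⁻ a in closedBall z r, ENNReal.ofReal (dist z a) ^ (-c) ∂μ =
      ∫⁻ x, (closedBall 0 r).indicator g x ∂μ := by
    rw [← lintegral_indicator measurableSet_closedBall, ← lintegral_add_left_eq_self _ z]
    congr 1 with x
    simp [g, indicator, dist_eq_norm]
  have hscale : ∫⁻ y, (closedBall 0 r).indicator g (r • y) ∂μ =
      ENNReal.ofReal r ^ (-c) * ∫⁻ y in closedBall 0 1, g y ∂μ := by
    rw [← lintegral_const_mul' _ _ (ENNReal.rpow_ne_top_of_ne_zero hr0 ENNReal.ofReal_ne_top),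
      ← lintegral_indicator measurableSet_closedBall]
    congr 1 with y
    simp only [indicator, mem_closedBall_zero_iff, norm_smul, Real.norm_of_nonneg hr.le, g,
      mul_le_iff_le_one_right hr]
    split_ifs
    · rw [ENNReal.ofReal_mul hr.le,
        ENNReal.mul_rpow_of_ne_top ENNReal.ofReal_ne_top ENNReal.ofReal_ne_top]
    · simp
  have hrd : ENNReal.ofReal |(r ^ finrank ℝ E)⁻¹| = (ENNReal.ofReal r ^ (finrank ℝ E : ℝ))⁻¹ := by
    rw [abs_of_pos (by positivity), ENNReal.ofReal_inv_of_pos (by positivity),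
      ENNReal.ofReal_pow hr.le, ENNReal.rpow_natCast]
  calc ∫⁻ a in closedBall z r, ENNReal.ofReal (dist z a) ^ (-c) ∂μ
      = ENNReal.ofReal r ^ (finrank ℝ E : ℝ) *
          ∫⁻ y, (closedBall 0 r).indicator g (r • y) ∂μ := by
        rw [htrans, lintegral_comp_smul μ _ hr.ne', hrd, ← mul_assoc,
          ENNReal.mul_inv_cancel (by positivity) (by finiteness), one_mul]
    _ = _ := by
        rw [hscale, ← mul_assoc, ← ENNReal.rpow_add _ _ hr0 ENNReal.ofReal_ne_top,
          sub_eq_add_neg]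

lemma exists_setLAverage_closedBall_rpow_neg_dist_le {c : ℝ} (hc0 : 0 ≤ c)
    (hc : c < finrank ℝ E) :
    ∃ C : ℝ≥0∞, C ≠ ∞ ∧ ∀ (z x : E) {r : ℝ}, 0 < r →
      ⨍⁻ a in closedBall x r, ENNReal.ofReal (dist z a) ^ (-c) ∂μ ≤
        C * ENNReal.ofReal r ^ (-c) := by
  set I := ∫⁻ x in closedBall (0 : E) 1, ENNReal.ofReal ‖x‖ ^ (-c) ∂μ
  have hB0 : μ (closedBall 0 1) ≠ 0 := (measure_closedBall_pos μ 0 one_pos).ne'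
  refine ⟨1 + I / μ (closedBall 0 1), ENNReal.add_ne_top.2 ⟨one_ne_top, ENNReal.div_ne_top
    (setLIntegral_unitClosedBall_rpow_neg_norm_lt_top μ hc0 hc).ne hB0⟩, ?_⟩
  intro z x r hr
  have hr0 : ENNReal.ofReal r ≠ 0 := (ENNReal.ofReal_pos.2 hr).ne'
  have hfar : ∀ a ∈ closedBall x r \ closedBall z r,
      ENNReal.ofReal (dist z a) ^ (-c) ≤ ENNReal.ofReal r ^ (-c) := by
    rintro a ⟨-, ha⟩
    rw [mem_closedBall, not_le, dist_comm] at ha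
    rw [ENNReal.rpow_neg, ENNReal.rpow_neg]
    exact ENNReal.inv_le_inv.2 (ENNReal.rpow_le_rpow (ENNReal.ofReal_le_ofReal ha.le) hc0)
  have hnear : ∫⁻ a in closedBall z r, ENNReal.ofReal (dist z a) ^ (-c) ∂μ =
      I / μ (closedBall 0 1) * (ENNReal.ofReal r ^ (-c) * μ (closedBall x r)) := by
    rw [setLIntegral_closedBall_rpow_neg_dist_eq μ c z hr, Measure.addHaar_closedBall' μ x hr.le,
      ENNReal.ofReal_pow hr.le, ← ENNReal.rpow_natCast, sub_eq_neg_add,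
      ENNReal.rpow_add _ _ hr0 ENNReal.ofReal_ne_top, ENNReal.div_eq_inv_mul]
    calc _ = ENNReal.ofReal r ^ (-c) * ENNReal.ofReal r ^ (finrank ℝ E : ℝ) *
          ((μ (closedBall 0 1))⁻¹ * μ (closedBall 0 1)) * I := by
          rw [ENNReal.inv_mul_cancel hB0 measure_closedBall_lt_top.ne]; ring
      _ = _ := by ring
  rw [setLAverage_eq]
  refine ENNReal.div_le_of_le_mul ?_
  calc ∫⁻ a in closedBall x r, ENNReal.ofReal (dist z a) ^ (-c) ∂μ
      ≤ ∫⁻ a in (closedBall x r \ closedBall z r) ∪ closedBall z r,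
          ENNReal.ofReal (dist z a) ^ (-c) ∂μ :=
        lintegral_mono_set (by rw [sdiff_union_self]; exact subset_union_left)
    _ ≤ ∫⁻ _ in closedBall x r, ENNReal.ofReal r ^ (-c) ∂μ +
          ∫⁻ a in closedBall z r, ENNReal.ofReal (dist z a) ^ (-c) ∂μ :=
        (lintegral_union_le _ _ _).trans <| add_le_add_left
          ((setLIntegral_mono measurable_const hfar).trans (lintegral_mono_set sdiff_subset)) _
    _ = _ := by rw [setLIntegral_const, hnear]; ring

end AddHaar

lemma ENNReal.rpow_one_sub_mul_inv_mul_inv_le {α : ℝ} (hα0 : 0 ≤ α) (hα1 : α ≤ 1)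
    {m x y : ℝ≥0∞} (hxy : x ≤ y) (hm : m ≤ 2 * y) :
    m ^ (1 - α) * (x⁻¹ * y⁻¹) ≤ 2 * x ^ (-(1 + α)) := by
  rcases eq_or_ne x 0 with rfl | hx0
  · rw [ENNReal.zero_rpow_of_neg (by linarith), mul_top two_ne_zero]
    exact le_top
  rcases eq_or_ne y ∞ with rfl | hyt
  · simp
  have hy0 : y ≠ 0 := (pos_of_ne_zero hx0 |>.trans_le hxy).ne'
  have hxt : x ≠ ∞ := ne_top_of_le_ne_top hyt hxy
  have h2 : (2 : ℝ≥0∞) ^ (1 - α) ≤ 2 := by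
    simpa using ENNReal.rpow_le_rpow_of_exponent_le one_le_two (by linarith : 1 - α ≤ 1)
  have hyx : y ^ (-α) ≤ x ^ (-α) := by
    rw [ENNReal.rpow_neg, ENNReal.rpow_neg]
    exact ENNReal.inv_le_inv.2 (ENNReal.rpow_le_rpow hxy hα0)
  calc m ^ (1 - α) * (x⁻¹ * y⁻¹)
      ≤ (2 * y) ^ (1 - α) * (x⁻¹ * y⁻¹) := by gcongr
    _ = 2 ^ (1 - α) * (y ^ (1 - α) * y⁻¹) * x⁻¹ := by
        rw [ENNReal.mul_rpow_of_nonneg _ _ (by linarith)]; ring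
    _ = 2 ^ (1 - α) * y ^ (-α) * x⁻¹ := by
        rw [← ENNReal.rpow_neg_one y, ← ENNReal.rpow_add _ _ hy0 hyt]; ring_nf
    _ ≤ 2 * x ^ (-α) * x⁻¹ := by gcongr
    _ = 2 * x ^ (-(1 + α)) := by
        rw [mul_assoc, ← ENNReal.rpow_neg_one x, ← ENNReal.rpow_add _ _ hx0 hxt]; ring_nf

lemma rpow_dist_mul_inv_dist_mul_inv_dist_le {P : Type*} [PseudoMetricSpace P] {α : ℝ}
    (hα0 : 0 ≤ α) (hα1 : α ≤ 1) (z w a : P) :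
    ENNReal.ofReal (dist z w) ^ (1 - α) *
        ((ENNReal.ofReal (dist z a))⁻¹ * (ENNReal.ofReal (dist w a))⁻¹) ≤
      2 * (ENNReal.ofReal (dist z a) ^ (-(1 + α)) + ENNReal.ofReal (dist w a) ^ (-(1 + α))) := by
  set x := ENNReal.ofReal (dist z a)
  set y := ENNReal.ofReal (dist w a)
  have hm : ENNReal.ofReal (dist z w) ≤ x + y := by
    rw [← ENNReal.ofReal_add dist_nonneg dist_nonneg]
    exact ENNReal.ofReal_le_ofReal (dist_triangle_right z w a)
  rcases le_total x y with hxy | hyx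
  · calc _ ≤ 2 * x ^ (-(1 + α)) :=
          ENNReal.rpow_one_sub_mul_inv_mul_inv_le hα0 hα1 hxy (hm.trans (by rw [two_mul]; gcongr))
      _ ≤ _ := by gcongr; exact le_self_add
  · calc _ = ENNReal.ofReal (dist z w) ^ (1 - α) * (y⁻¹ * x⁻¹) := by rw [mul_comm x⁻¹]
      _ ≤ 2 * y ^ (-(1 + α)) :=
          ENNReal.rpow_one_sub_mul_inv_mul_inv_le hα0 hα1 hyx (hm.trans (by rw [two_mul]; gcongr))
      _ ≤ _ := by gcongr; exact le_add_self

noncomputable def htildeKernel (α : ℝ) (a : ℂ) (p : ℂ × ℂ) : ℝ≥0∞ :=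
  ENNReal.ofReal (dist p.1 p.2) ^ (1 - α) *
    ((ENNReal.ofReal (dist p.1 a))⁻¹ * (ENNReal.ofReal (dist p.2 a))⁻¹)

lemma htildeKernel_swap (α : ℝ) (a z w : ℂ) :
    htildeKernel α a (w, z) = htildeKernel α a (z, w) := by
  simp only [htildeKernel, dist_comm w z, mul_comm (ENNReal.ofReal (dist w a))⁻¹]

lemma measurable_htildeKernel (α : ℝ) : Measurable (Function.uncurry (htildeKernel α)) := by
  unfold htildeKernel; fun_prop

lemma exists_setLAverage_htildeKernel_le {α : ℝ} (hα0 : 0 ≤ α) (hα1 : α < 1) :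
    ∃ M : ℝ≥0∞, M ≠ ∞ ∧ ∀ (b : ℂ) (p : ℂ × ℂ) {r : ℝ}, 0 < r →
      ⨍⁻ a in closedBall b r, ENNReal.ofReal (dist a b) ^ (1 + α) * htildeKernel α a p ∂volume
        ≤ M := by
  obtain ⟨C, hC, hball⟩ := exists_setLAverage_closedBall_rpow_neg_dist_le (volume : Measure ℂ)
    (c := 1 + α) (by linarith) (by rw [Complex.finrank_real_complex]; push_cast; linarith)
  refine ⟨4 * C, ENNReal.mul_ne_top (by norm_num) hC, fun b p r hr => ?_⟩
  set R := ENNReal.ofReal r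
  have hpt : ∀ a ∈ closedBall b r, ENNReal.ofReal (dist a b) ^ (1 + α) * htildeKernel α a p ≤
      R ^ (1 + α) * 2 * (ENNReal.ofReal (dist p.1 a) ^ (-(1 + α)) +
        ENNReal.ofReal (dist p.2 a) ^ (-(1 + α))) := by
    intro a ha
    rw [mul_assoc]
    gcongr
    · exact ENNReal.ofReal_le_ofReal (mem_closedBall.1 ha)
    · exact rpow_dist_mul_inv_dist_mul_inv_dist_le hα0 hα1.le p.1 p.2 a
  calc ⨍⁻ a in closedBall b r, ENNReal.ofReal (dist a b) ^ (1 + α) * htildeKernel α a p ∂volume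
      ≤ ⨍⁻ a in closedBall b r, R ^ (1 + α) * 2 * (ENNReal.ofReal (dist p.1 a) ^ (-(1 + α)) +
          ENNReal.ofReal (dist p.2 a) ^ (-(1 + α))) ∂volume :=
        laverage_mono_ae ((ae_restrict_iff' measurableSet_closedBall).2 (ae_of_all _ hpt))
    _ = R ^ (1 + α) * 2 * (⨍⁻ a in closedBall b r, ENNReal.ofReal (dist p.1 a) ^ (-(1 + α)) ∂volume
          + ⨍⁻ a in closedBall b r, ENNReal.ofReal (dist p.2 a) ^ (-(1 + α)) ∂volume) := by
        simp only [laverage_eq']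
        rw [lintegral_const_mul' _ _ (by finiteness), lintegral_add_left (by fun_prop)]
    _ ≤ R ^ (1 + α) * 2 * (C * R ^ (-(1 + α)) + C * R ^ (-(1 + α))) := by
        gcongr <;> exact hball _ _ hr
    _ = 4 * C * (R ^ (1 + α) * R ^ (-(1 + α))) := by ring
    _ = 4 * C := by
        rw [← ENNReal.rpow_add _ _ (ENNReal.ofReal_pos.2 hr).ne' ENNReal.ofReal_ne_top,
          add_neg_cancel, ENNReal.rpow_zero, mul_one]

lemma tendsto_mul_ofReal_rpow_nhdsGT_zero {K : ℝ≥0∞} (hK : K ≠ ∞) {α : ℝ} (hα : 0 < α) :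
    Tendsto (fun r : ℝ ↦ K * ENNReal.ofReal r ^ α) (𝓝[>] 0) (𝓝 0) := by
  have h : Tendsto (fun r : ℝ ↦ ENNReal.ofReal r ^ α) (𝓝[>] 0) (𝓝 (ENNReal.ofReal 0 ^ α)) :=
    ((ENNReal.continuous_rpow_const.comp ENNReal.continuous_ofReal).tendsto 0).mono_left
      nhdsWithin_le_nhds
  simpa [ENNReal.zero_rpow_of_pos hα] using ENNReal.Tendsto.const_mul h (Or.inr hK)

lemma exists_setLAverage_htildeKernel_le_mul_rpow {α : ℝ} (hα0 : 0 < α) (hα1 : α ≤ 1)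
    {b z : ℂ} (hz : z ≠ b) (w : ℂ) :
    ∃ K : ℝ≥0∞, K ≠ ∞ ∧ ∀ r : ℝ, 0 < r → r ≤ dist z b / 2 →
      ⨍⁻ a in closedBall b r, ENNReal.ofReal (dist a b) ^ (1 + α) * htildeKernel α a (z, w)
        ∂volume ≤ K * ENNReal.ofReal r ^ α := by
  obtain ⟨C, hC, hball⟩ := exists_setLAverage_closedBall_rpow_neg_dist_le (volume : Measure ℂ)
    (c := 1) zero_le_one (by rw [Complex.finrank_real_complex]; norm_num)
  set η := dist z b
  have hη0 : ENNReal.ofReal (η / 2) ≠ 0 := (ENNReal.ofReal_pos.2 (half_pos (dist_pos.2 hz))).ne'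
  set D := ENNReal.ofReal (dist z w) ^ (1 - α) * (ENNReal.ofReal (η / 2))⁻¹
  refine ⟨D * C, by finiteness, fun r hr hrη ↦ ?_⟩
  set R := ENNReal.ofReal r
  have hpt : ∀ a ∈ closedBall b r, ENNReal.ofReal (dist a b) ^ (1 + α) * htildeKernel α a (z, w)
      ≤ R ^ (1 + α) * D * ENNReal.ofReal (dist w a) ^ (-1 : ℝ) := by
    intro a ha
    have hab : dist a b ≤ r := mem_closedBall.1 ha
    have hza : η / 2 ≤ dist z a := by linarith [dist_triangle z a b]
    rw [htildeKernel, ENNReal.rpow_neg_one]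
    calc _ ≤ R ^ (1 + α) * (ENNReal.ofReal (dist z w) ^ (1 - α) *
          ((ENNReal.ofReal (η / 2))⁻¹ * (ENNReal.ofReal (dist w a))⁻¹)) := by
          gcongr
          exact ENNReal.ofReal_le_ofReal hab
      _ = _ := by ring
  calc ⨍⁻ a in closedBall b r,
        ENNReal.ofReal (dist a b) ^ (1 + α) * htildeKernel α a (z, w) ∂volume
      ≤ ⨍⁻ a in closedBall b r, R ^ (1 + α) * D * ENNReal.ofReal (dist w a) ^ (-1 : ℝ) ∂volume :=
        laverage_mono_ae ((ae_restrict_iff' measurableSet_closedBall).2 (ae_of_all _ hpt))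
    _ = R ^ (1 + α) * D * ⨍⁻ a in closedBall b r, ENNReal.ofReal (dist w a) ^ (-1 : ℝ) ∂volume := by
        simp only [laverage_eq']
        exact lintegral_const_mul' _ _ (by finiteness)
    _ ≤ R ^ (1 + α) * D * (C * R ^ (-1 : ℝ)) := by gcongr; exact hball w b hr
    _ = D * C * (R ^ (1 + α) * R ^ (-1 : ℝ)) := by ring
    _ = D * C * R ^ α := by
        rw [← ENNReal.rpow_add _ _ (ENNReal.ofReal_pos.2 hr).ne' ENNReal.ofReal_ne_top,
          show 1 + α + -1 = α by ring]

lemma tendsto_setLAverage_htildeKernel_of_fst_ne {α : ℝ} (hα0 : 0 < α) (hα1 : α ≤ 1) {b z : ℂ}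
    (hz : z ≠ b) (w : ℂ) :
    Tendsto (fun r : ℝ ↦ ⨍⁻ a in closedBall b r,
      ENNReal.ofReal (dist a b) ^ (1 + α) * htildeKernel α a (z, w) ∂volume) (𝓝[>] 0) (𝓝 0) := by
  obtain ⟨K, hK, hbound⟩ := exists_setLAverage_htildeKernel_le_mul_rpow hα0 hα1 hz w
  refine tendsto_of_tendsto_of_tendsto_of_le_of_le' tendsto_const_nhds
    (tendsto_mul_ofReal_rpow_nhdsGT_zero hK hα0) (Eventually.of_forall fun _ ↦ bot_le) ?_
  filter_upwards [Ioc_mem_nhdsGT (half_pos (dist_pos.2 hz))] with r hr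
  exact hbound r hr.1 hr.2

lemma tendsto_setLAverage_htildeKernel {α : ℝ} (hα0 : 0 < α) (hα1 : α ≤ 1) {b : ℂ}
    {p : ℂ × ℂ} (hp : p ≠ (b, b)) :
    Tendsto (fun r : ℝ ↦ ⨍⁻ a in closedBall b r,
      ENNReal.ofReal (dist a b) ^ (1 + α) * htildeKernel α a p ∂volume) (𝓝[>] 0) (𝓝 0) := by
  obtain ⟨z, w⟩ := p
  by_cases hz : z = b
  · subst hz
    have hw : w ≠ z := fun h ↦ hp (by rw [h])
    simpa only [htildeKernel_swap] using tendsto_setLAverage_htildeKernel_of_fst_ne hα0 hα1 hw z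
  · exact tendsto_setLAverage_htildeKernel_of_fst_ne hα0 hα1 hz w

lemma setLAverage_rpow_dist_mul_Htilde (α : ℝ) (σ : Measure (ℂ × ℂ)) [SFinite σ] (b : ℂ)
    (r : ℝ) :
    ⨍⁻ a in closedBall b r, ENNReal.ofReal (dist a b) ^ (1 + α) * Htilde α σ a ∂volume =
      ∫⁻ p, ⨍⁻ a in closedBall b r,
        ENNReal.ofReal (dist a b) ^ (1 + α) * htildeKernel α a p ∂volume ∂σ := by
  simp only [laverage_eq']
  rw [← lintegral_lintegral_swap (by unfold htildeKernel; fun_prop)]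
  congr 1 with a
  exact (lintegral_const_mul _ (by fun_prop)).symm

lemma measure_setOf_le_inter_div_le_inv_mul_setLAverage {X : Type*} [MeasurableSpace X]
    (μ : Measure X) {f : X → ℝ≥0∞} (hf : Measurable f) (s : Set X) {ε : ℝ≥0∞} (hε0 : ε ≠ 0)
    (hε : ε ≠ ∞) :
    μ ({x | ε ≤ f x} ∩ s) / μ s ≤ ε⁻¹ * ⨍⁻ x in s, f x ∂μ := by
  have h := mul_meas_ge_le_lintegral₀ (μ := (μ s)⁻¹ • μ.restrict s) hf.aemeasurable ε
  rwa [Measure.smul_apply, Measure.restrict_apply (measurableSet_le measurable_const hf),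
    smul_eq_mul, ENNReal.mul_le_iff_le_inv hε0 hε, ← ENNReal.div_eq_inv_mul,
    ← setLAverage_eq'] at h

lemma fullAreaDensityAt_setOf_lt {f : ℂ → ℝ≥0∞} (hf : Measurable f) {b : ℂ}
    (hf0 : Tendsto (fun r : ℝ ↦ ⨍⁻ a in closedBall b r, f a ∂volume) (𝓝[>] 0) (𝓝 0))
    {δ : ℝ} (hδ : 0 < δ) :
    FullAreaDensityAt {a | f a < ENNReal.ofReal δ} b := by
  set E := {a | f a < ENNReal.ofReal δ}
  have hδ0 : ENNReal.ofReal δ ≠ 0 := (ENNReal.ofReal_pos.2 hδ).ne'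
  have hcheb : ∀ r : ℝ, volume (closedBall b r \ E) / volume (closedBall b r) ≤
      (ENNReal.ofReal δ)⁻¹ * ⨍⁻ a in closedBall b r, f a ∂volume := by
    intro r
    have hset : closedBall b r \ E = {a | ENNReal.ofReal δ ≤ f a} ∩ closedBall b r := by
      ext a
      simp [E, and_comm]
    rw [hset]
    exact measure_setOf_le_inter_div_le_inv_mul_setLAverage volume hf _ hδ0 ENNReal.ofReal_ne_top
  have hcompl : Tendsto (fun r : ℝ ↦ volume (closedBall b r \ E) / volume (closedBall b r))
      (𝓝[>] 0) (𝓝 0) := by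
    have h := ENNReal.Tendsto.const_mul hf0 (Or.inr (ENNReal.inv_ne_top.2 hδ0))
    rw [mul_zero] at h
    exact tendsto_of_tendsto_of_tendsto_of_le_of_le tendsto_const_nhds h (fun _ ↦ bot_le) hcheb
  have hratio : ∀ r : ℝ, 0 < r → volume (E ∩ closedBall b r) / ENNReal.ofReal (Real.pi * r ^ 2) =
      1 - volume (closedBall b r \ E) / volume (closedBall b r) := by
    intro r hr
    have hB : ENNReal.ofReal (Real.pi * r ^ 2) = volume (closedBall b r) := by
      rw [Complex.volume_closedBall, ENNReal.ofReal_mul Real.pi_pos.le, ENNReal.ofReal_pow hr.le,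
        ← NNReal.coe_real_pi, ENNReal.ofReal_coe_nnreal, mul_comm]
    have hB0 : volume (closedBall b r) ≠ 0 := (measure_closedBall_pos volume b hr).ne'
    have hBt : volume (closedBall b r) ≠ ∞ := measure_closedBall_lt_top.ne
    rw [hB, ← ENNReal.div_self hB0 hBt, ← ENNReal.sub_div (fun _ _ ↦ hB0), inter_comm,
      ENNReal.eq_sub_of_add_eq (ne_top_of_le_ne_top hBt (measure_mono sdiff_subset))
        (measure_inter_add_sdiff _ (measurableSet_lt hf measurable_const))]
  have h := ENNReal.Tendsto.sub tendsto_const_nhds hcompl (Or.inl one_ne_top)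
  rw [tsub_zero] at h
  refine h.congr' ?_
  filter_upwards [self_mem_nhdsWithin] with r hr
  exact (hratio r hr).symm

theorem Htilde_full_density_general (α : ℝ) (hα0 : 0 < α) (hα1 : α < 1)
    (b : ℂ) (σ : Measure (ℂ × ℂ)) [IsFiniteMeasure σ]
    (hbb : σ {((b : ℂ), (b : ℂ))} = 0) (δ : ℝ) (hδ : 0 < δ) :
    FullAreaDensityAt
      {a : ℂ | (ENNReal.ofReal (dist a b)) ^ (1 + α) * Htilde α σ a <
        ENNReal.ofReal δ} b := by
  have hmeas : Measurable (Htilde α σ) := (measurable_htildeKernel α).lintegral_prod_right'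
  refine fullAreaDensityAt_setOf_lt (by fun_prop) ?_ hδ
  obtain ⟨M, hM, hbound⟩ := exists_setLAverage_htildeKernel_le hα0.le hα1
  simp only [setLAverage_rpow_dist_mul_Htilde]
  rw [← lintegral_zero]
  refine tendsto_lintegral_filter_of_dominated_convergence (fun _ ↦ M) ?_ ?_ ?_ ?_
  · refine Eventually.of_forall fun r ↦ ?_
    simp only [laverage_eq']
    exact Measurable.lintegral_prod_left (by unfold htildeKernel; fun_prop)
  · filter_upwards [self_mem_nhdsWithin] with r hr
    exact ae_of_all _ fun p ↦ hbound b p hr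
  · simpa using ENNReal.mul_ne_top hM (measure_ne_top σ univ)
  · filter_upwards [compl_mem_ae_iff.2 hbb] with p hp
    exact tendsto_setLAverage_htildeKernel hα0 hα1.le hp

/-- if σ = |μ| is a finite measure on X × X with no mass at (b,b),
then for every δ > 0 the set {a : |a-b|^{1+α} H̃(μ)(a) < δ} has full area density
at b. -/
theorem Htilde_full_density (α : ℝ) (hα0 : 0 < α) (hα1 : α < 1)
    (X : Set ℂ) (hX : IsCompact X) (b : ℂ) (hb : b ∈ X)
    (σ : Measure (ℂ × ℂ)) [IsFiniteMeasure σ] (hsupp : σ ((X ×ˢ X)ᶜ) = 0)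
    (hbb : σ {((b : ℂ), (b : ℂ))} = 0) (δ : ℝ) (hδ : 0 < δ) :
    FullAreaDensityAt
      {a : ℂ | (ENNReal.ofReal (dist a b)) ^ (1 + α) * Htilde α σ a <
        ENNReal.ofReal δ} b :=
  Htilde_full_density_general α hα0 hα1 b σ hbb δ hδ
end

section
/- Let 0 < α < 1, U ⊆ ℂ a bounded open set with boundary X, and b ∈ X. Suppose there exist points a_n ∈ U with a_n → b such that for every f in the algebra A = A_α(U), the difference quotients (f(a_n) - f(b))/(a_n - b) form a bounded sequence. Then A admits a nonzero bounded (continuous) point derivation at b. -/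
open MeasureTheory Metric Filter ENNReal

/-- Membership in the algebra `A_α(U)`: holomorphic on `U`, continuous on the
closure, and little-Lipschitz-α on the closure of `U`. -/
def MemA (α : ℝ) (U : Set ℂ) (f : ℂ → ℂ) : Prop :=
  DifferentiableOn ℂ f U ∧ ContinuousOn f (closure U) ∧
  (∃ C, ∀ z ∈ closure U, ∀ w ∈ closure U, ‖f z - f w‖ ≤ C * ‖z - w‖ ^ α) ∧
  (∀ ε > 0, ∃ δ > 0, ∀ z ∈ closure U, ∀ w ∈ closure U,
    ‖z - w‖ < δ → ‖f z - f w‖ ≤ ε * ‖z - w‖ ^ α)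

/-- The norm on `A_α(U)`: sup norm over the closure of `U` plus α-Hölder seminorm. -/
noncomputable def aNorm (α : ℝ) (U : Set ℂ) (f : ℂ → ℂ) : ℝ :=
  sSup ((fun z => ‖f z‖) '' closure U) +
  sSup {c | ∃ z ∈ closure U, ∃ w ∈ closure U, z ≠ w ∧ c = ‖f z - f w‖ / ‖z - w‖ ^ α}

/-- `D` is a bounded (continuous) point derivation on `A_α(U)` at `b`. -/
def IsBoundedPointDerivation (α : ℝ) (U : Set ℂ) (b : ℂ) (D : (ℂ → ℂ) → ℂ) : Prop :=
  (∀ f g : ℂ → ℂ, MemA α U f → MemA α U g → D (f + g) = D f + D g) ∧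
  (∀ (c : ℂ) (f : ℂ → ℂ), MemA α U f → D (c • f) = c * D f) ∧
  (∃ M : ℝ, 0 < M ∧ ∀ f : ℂ → ℂ, MemA α U f → ‖D f‖ ≤ M * aNorm α U f) ∧
  (∀ f g : ℂ → ℂ, MemA α U f → MemA α U g → D (f * g) = f b * D g + g b * D f)

/-! Along an ultrafilter refining `atTop`, each bounded sequence of difference quotients
`(f (a n) - f b) / (a n - b)` converges; the limit `D f` is linear in `f`, satisfies the Leibniz
rule because `f (a n) → f b`, and `D z = 1`. Continuity of `D` is the uniform boundedness
principle: realised as a Banach space, `A_α(U)` carries the continuous functionals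
`f ↦ (f (a n) - f b) / (a n - b)`, which are pointwise bounded by hypothesis, hence uniformly
bounded in norm. Completeness holds because a series with summable norms converges uniformly
on `closure U`, and the tails of the norm series control its little-Lipschitz quotients. -/

open Topology

section Norm

variable {α : ℝ} {U : Set ℂ} {f g : ℂ → ℂ}

noncomputable def aSupNorm (U : Set ℂ) (f : ℂ → ℂ) : ℝ :=
  sSup ((fun z => ‖f z‖) '' closure U)

noncomputable def aHolderSeminorm (α : ℝ) (U : Set ℂ) (f : ℂ → ℂ) : ℝ :=
  sSup {c | ∃ z ∈ closure U, ∃ w ∈ closure U, z ≠ w ∧ c = ‖f z - f w‖ / ‖z - w‖ ^ α}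

theorem aNorm_eq_add (α : ℝ) (U : Set ℂ) (f : ℂ → ℂ) :
    aNorm α U f = aSupNorm U f + aHolderSeminorm α U f := rfl

theorem aSupNorm_nonneg (U : Set ℂ) (f : ℂ → ℂ) : 0 ≤ aSupNorm U f :=
  Real.sSup_nonneg (by rintro x ⟨z, -, rfl⟩; exact norm_nonneg _)

theorem aHolderSeminorm_nonneg (α : ℝ) (U : Set ℂ) (f : ℂ → ℂ) : 0 ≤ aHolderSeminorm α U f :=
  Real.sSup_nonneg (by rintro x ⟨z, -, w, -, -, rfl⟩; positivity)

theorem aNorm_nonneg (α : ℝ) (U : Set ℂ) (f : ℂ → ℂ) : 0 ≤ aNorm α U f :=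
  add_nonneg (aSupNorm_nonneg U f) (aHolderSeminorm_nonneg α U f)

theorem aNorm_congr (h : Set.EqOn f g (closure U)) : aNorm α U f = aNorm α U g := by
  have hsup : (fun z => ‖f z‖) '' closure U = (fun z => ‖g z‖) '' closure U :=
    Set.image_congr fun z hz => by rw [h hz]
  have hhol : {c | ∃ z ∈ closure U, ∃ w ∈ closure U, z ≠ w ∧ c = ‖f z - f w‖ / ‖z - w‖ ^ α} =
      {c | ∃ z ∈ closure U, ∃ w ∈ closure U, z ≠ w ∧ c = ‖g z - g w‖ / ‖z - w‖ ^ α} := by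
    ext c
    constructor <;> rintro ⟨z, hz, w, hw, hzw, rfl⟩ <;>
      exact ⟨z, hz, w, hw, hzw, by rw [h hz, h hw]⟩
  rw [aNorm, aNorm, hsup, hhol]

theorem aNorm_neg (f : ℂ → ℂ) : aNorm α U (-f) = aNorm α U f := by
  simp only [aNorm, Pi.neg_apply, ← neg_sub', norm_neg]

theorem norm_le_aSupNorm (hUb : Bornology.IsBounded U) (hf : ContinuousOn f (closure U))
    {z : ℂ} (hz : z ∈ closure U) : ‖f z‖ ≤ aSupNorm U f :=
  le_csSup (hUb.isCompact_closure.bddAbove_image hf.norm) ⟨z, hz, rfl⟩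

theorem norm_sub_le_aHolderSeminorm_mul (hf : MemA α U f) {z w : ℂ} (hz : z ∈ closure U)
    (hw : w ∈ closure U) : ‖f z - f w‖ ≤ aHolderSeminorm α U f * ‖z - w‖ ^ α := by
  obtain rfl | hzw := eq_or_ne z w
  · rw [sub_self, norm_zero]
    exact mul_nonneg (aHolderSeminorm_nonneg α U f) (by positivity)
  have hpos : 0 < ‖z - w‖ ^ α := by have := sub_ne_zero.2 hzw; positivity
  obtain ⟨C, hC⟩ := hf.2.2.1
  have hbdd : BddAbove
      {c | ∃ z ∈ closure U, ∃ w ∈ closure U, z ≠ w ∧ c = ‖f z - f w‖ / ‖z - w‖ ^ α} := by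
    refine ⟨C, ?_⟩
    rintro x ⟨z', hz', w', hw', hzw', rfl⟩
    have : 0 < ‖z' - w'‖ ^ α := by have := sub_ne_zero.2 hzw'; positivity
    exact (div_le_iff₀ this).2 (hC z' hz' w' hw')
  rw [← div_le_iff₀ hpos]
  exact le_csSup hbdd ⟨z, hz, w, hw, hzw, rfl⟩

theorem norm_le_aNorm (hUb : Bornology.IsBounded U) (hf : MemA α U f) {z : ℂ}
    (hz : z ∈ closure U) : ‖f z‖ ≤ aNorm α U f :=
  (norm_le_aSupNorm hUb hf.2.1 hz).trans (le_add_of_nonneg_right (aHolderSeminorm_nonneg α U f))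

theorem norm_sub_le_aNorm_mul (hf : MemA α U f) {z w : ℂ} (hz : z ∈ closure U)
    (hw : w ∈ closure U) : ‖f z - f w‖ ≤ aNorm α U f * ‖z - w‖ ^ α :=
  (norm_sub_le_aHolderSeminorm_mul hf hz hw).trans <| by
    gcongr; exact le_add_of_nonneg_left (aSupNorm_nonneg U f)

theorem aNorm_le_of_bounds {B₁ B₂ : ℝ} (hB₁ : 0 ≤ B₁) (hB₂ : 0 ≤ B₂)
    (h₁ : ∀ z ∈ closure U, ‖f z‖ ≤ B₁)
    (h₂ : ∀ z ∈ closure U, ∀ w ∈ closure U, ‖f z - f w‖ ≤ B₂ * ‖z - w‖ ^ α) :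
    aNorm α U f ≤ B₁ + B₂ := by
  refine add_le_add (Real.sSup_le ?_ hB₁) (Real.sSup_le ?_ hB₂)
  · rintro x ⟨z, hz, rfl⟩
    exact h₁ z hz
  · rintro x ⟨z, hz, w, hw, hzw, rfl⟩
    have : 0 < ‖z - w‖ ^ α := by have := sub_ne_zero.2 hzw; positivity
    exact (div_le_iff₀ this).2 (h₂ z hz w hw)

theorem aNorm_zero : aNorm α U 0 = 0 := by
  refine le_antisymm ?_ (aNorm_nonneg α U 0)
  simpa using aNorm_le_of_bounds (α := α) (U := U) (f := 0) le_rfl le_rfl (by simp) (by simp)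

theorem aNorm_add_le (hUb : Bornology.IsBounded U) (hf : MemA α U f) (hg : MemA α U g) :
    aNorm α U (f + g) ≤ aNorm α U f + aNorm α U g := by
  calc aNorm α U (f + g)
      ≤ (aSupNorm U f + aSupNorm U g) + (aHolderSeminorm α U f + aHolderSeminorm α U g) := by
        refine aNorm_le_of_bounds (by positivity [aSupNorm_nonneg U f, aSupNorm_nonneg U g])
          (add_nonneg (aHolderSeminorm_nonneg α U f) (aHolderSeminorm_nonneg α U g))
          (fun z hz => ?_) (fun z hz w hw => ?_)
        · exact (norm_add_le _ _).trans
            (add_le_add (norm_le_aSupNorm hUb hf.2.1 hz) (norm_le_aSupNorm hUb hg.2.1 hz))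
        · rw [Pi.add_apply, Pi.add_apply, add_sub_add_comm, add_mul]
          exact (norm_add_le _ _).trans (add_le_add
            (norm_sub_le_aHolderSeminorm_mul hf hz hw) (norm_sub_le_aHolderSeminorm_mul hg hz hw))
    _ = aNorm α U f + aNorm α U g := by simp only [aNorm_eq_add]; ring

theorem aNorm_smul_le (hUb : Bornology.IsBounded U) (c : ℂ) (hf : MemA α U f) :
    aNorm α U (c • f) ≤ ‖c‖ * aNorm α U f := by
  calc aNorm α U (c • f) ≤ ‖c‖ * aSupNorm U f + ‖c‖ * aHolderSeminorm α U f := by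
        refine aNorm_le_of_bounds (by positivity [aSupNorm_nonneg U f])
          (by positivity [aHolderSeminorm_nonneg α U f]) (fun z hz => ?_) (fun z hz w hw => ?_)
        · rw [Pi.smul_apply, norm_smul]
          exact mul_le_mul_of_nonneg_left (norm_le_aSupNorm hUb hf.2.1 hz) (norm_nonneg c)
        · rw [Pi.smul_apply, Pi.smul_apply, ← smul_sub, norm_smul, mul_assoc]
          exact mul_le_mul_of_nonneg_left (norm_sub_le_aHolderSeminorm_mul hf hz hw)
            (norm_nonneg c)
    _ = ‖c‖ * aNorm α U f := by rw [aNorm_eq_add, mul_add]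

theorem eqOn_zero_of_aNorm_eq_zero (hUb : Bornology.IsBounded U) (hf : MemA α U f)
    (h : aNorm α U f = 0) : Set.EqOn f 0 (closure U) := fun _ hz =>
  norm_le_zero_iff.1 (h ▸ norm_le_aNorm hUb hf hz)

end Norm

namespace MemA

variable {α : ℝ} {U : Set ℂ} {f g : ℂ → ℂ}

theorem congr (hf : MemA α U f) (h : Set.EqOn f g (closure U)) : MemA α U g := by
  obtain ⟨hd, hc, ⟨C, hC⟩, hl⟩ := hf
  refine ⟨hd.congr fun z hz => (h (subset_closure hz)).symm, hc.congr fun z hz => (h hz).symm,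
    ⟨C, fun z hz w hw => ?_⟩, fun ε hε => ?_⟩
  · rw [← h hz, ← h hw]
    exact hC z hz w hw
  · obtain ⟨δ, hδ, hδ'⟩ := hl ε hε
    refine ⟨δ, hδ, fun z hz w hw hzw => ?_⟩
    rw [← h hz, ← h hw]
    exact hδ' z hz w hw hzw

theorem add (hf : MemA α U f) (hg : MemA α U g) : MemA α U (f + g) := by
  obtain ⟨hd, hc, ⟨C, hC⟩, hl⟩ := hf
  obtain ⟨hd', hc', ⟨C', hC'⟩, hl'⟩ := hg
  refine ⟨hd.add hd', hc.add hc', ⟨C + C', fun z hz w hw => ?_⟩, fun ε hε => ?_⟩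
  · rw [Pi.add_apply, Pi.add_apply, add_sub_add_comm, add_mul]
    exact (norm_add_le _ _).trans (add_le_add (hC z hz w hw) (hC' z hz w hw))
  · obtain ⟨δ, hδ, h₁⟩ := hl (ε / 2) (half_pos hε)
    obtain ⟨δ', hδ', h₂⟩ := hl' (ε / 2) (half_pos hε)
    refine ⟨min δ δ', lt_min hδ hδ', fun z hz w hw hzw => ?_⟩
    rw [Pi.add_apply, Pi.add_apply, add_sub_add_comm, ← add_halves ε, add_mul]
    exact (norm_add_le _ _).trans (add_le_add
      (h₁ z hz w hw (hzw.trans_le (min_le_left _ _)))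
      (h₂ z hz w hw (hzw.trans_le (min_le_right _ _))))

theorem const_smul (c : ℂ) (hf : MemA α U f) : MemA α U (c • f) := by
  obtain ⟨hd, hc, ⟨C, hC⟩, hl⟩ := hf
  refine ⟨hd.const_smul c, hc.const_smul c, ⟨‖c‖ * C, fun z hz w hw => ?_⟩, fun ε hε => ?_⟩
  · rw [Pi.smul_apply, Pi.smul_apply, ← smul_sub, norm_smul, mul_assoc]
    exact mul_le_mul_of_nonneg_left (hC z hz w hw) (norm_nonneg c)
  · obtain ⟨δ, hδ, h⟩ := hl (ε / (‖c‖ + 1)) (by positivity)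
    refine ⟨δ, hδ, fun z hz w hw hzw => ?_⟩
    rw [Pi.smul_apply, Pi.smul_apply, ← smul_sub, norm_smul]
    calc ‖c‖ * ‖f z - f w‖ ≤ (‖c‖ + 1) * (ε / (‖c‖ + 1) * ‖z - w‖ ^ α) := by
          gcongr
          · linarith
          · exact h z hz w hw hzw
      _ = ε * ‖z - w‖ ^ α := by field_simp

theorem zero : MemA α U 0 :=
  ⟨differentiableOn_const 0, continuousOn_const, ⟨0, fun z _ w _ => by simp⟩,
    fun _ hε => ⟨1, one_pos, fun z _ w _ _ => by simp; positivity⟩⟩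

end MemA

theorem le_rpow_sub_mul_rpow {α x B : ℝ} (hα1 : α < 1) (hx : 0 ≤ x) (hxB : x ≤ B) :
    x ≤ B ^ (1 - α) * x ^ α := by
  obtain rfl | hx' := hx.eq_or_lt
  · exact mul_nonneg (Real.rpow_nonneg hxB _) (Real.rpow_nonneg le_rfl _)
  calc x = x ^ (1 - α) * x ^ α := by rw [← Real.rpow_add hx', sub_add_cancel, Real.rpow_one]
    _ ≤ B ^ (1 - α) * x ^ α := by gcongr

theorem memA_id {α : ℝ} {U : Set ℂ} (hα1 : α < 1) (hUb : Bornology.IsBounded U) :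
    MemA α U id := by
  obtain ⟨R, hR⟩ := hUb.closure.exists_norm_le
  refine ⟨differentiableOn_id, continuousOn_id, ⟨(2 * R) ^ (1 - α), fun z hz w hw => ?_⟩,
    fun ε hε => ⟨ε ^ (1 - α)⁻¹, by positivity, fun z _ w _ hzw => ?_⟩⟩
  · exact le_rpow_sub_mul_rpow hα1 (norm_nonneg _)
      ((norm_sub_le z w).trans (by linarith [hR z hz, hR w hw]))
  · have hε' : (ε ^ (1 - α)⁻¹) ^ (1 - α) = ε := by
      rw [← Real.rpow_mul hε.le, inv_mul_cancel₀ (sub_ne_zero.2 hα1.ne'), Real.rpow_one]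
    simpa only [hε', id] using le_rpow_sub_mul_rpow hα1 (norm_nonneg (z - w)) hzw.le

theorem MemA.finsetSum {α : ℝ} {U : Set ℂ} {ι : Type*} {s : Finset ι} {g : ι → ℂ → ℂ}
    (hg : ∀ i ∈ s, MemA α U (g i)) : MemA α U (∑ i ∈ s, g i) :=
  Finset.sum_induction g (MemA α U) (fun _ _ => MemA.add) MemA.zero hg

theorem norm_tsum_sub_tsum_le {ι : Type*} {u v : ι → ℂ} {c : ι → ℝ} {K : ℝ} (hc : Summable c)
    (hu : ∀ i, ‖u i‖ ≤ c i) (hv : ∀ i, ‖v i‖ ≤ c i) (huv : ∀ i, ‖u i - v i‖ ≤ c i * K) :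
    ‖∑' i, u i - ∑' i, v i‖ ≤ (∑' i, c i) * K := by
  rw [← (hc.of_norm_bounded hu).tsum_sub (hc.of_norm_bounded hv)]
  exact tsum_of_norm_bounded (hc.hasSum.mul_right K) huv

section Series

variable {α : ℝ} {U : Set ℂ} {g : ℕ → ℂ → ℂ}

theorem summable_of_summable_aNorm (hUb : Bornology.IsBounded U) (hg : ∀ j, MemA α U (g j))
    (hv : Summable fun j => aNorm α U (g j)) {z : ℂ} (hz : z ∈ closure U) :
    Summable fun j => g j z :=
  hv.of_norm_bounded fun j => norm_le_aNorm hUb (hg j) hz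

theorem norm_tsum_le_of_summable_aNorm (hUb : Bornology.IsBounded U) (hg : ∀ j, MemA α U (g j))
    (hv : Summable fun j => aNorm α U (g j)) {z : ℂ} (hz : z ∈ closure U) :
    ‖∑' j, g j z‖ ≤ ∑' j, aNorm α U (g j) :=
  tsum_of_norm_bounded hv.hasSum fun j => norm_le_aNorm hUb (hg j) hz

theorem norm_tsum_sub_tsum_le_of_summable_aNorm (hUb : Bornology.IsBounded U)
    (hg : ∀ j, MemA α U (g j)) (hv : Summable fun j => aNorm α U (g j))
    {z w : ℂ} (hz : z ∈ closure U) (hw : w ∈ closure U) :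
    ‖∑' j, g j z - ∑' j, g j w‖ ≤ (∑' j, aNorm α U (g j)) * ‖z - w‖ ^ α :=
  norm_tsum_sub_tsum_le hv (fun j => norm_le_aNorm hUb (hg j) hz)
    (fun j => norm_le_aNorm hUb (hg j) hw) (fun j => norm_sub_le_aNorm_mul (hg j) hz hw)

theorem aNorm_tsum_le (hUb : Bornology.IsBounded U) (hg : ∀ j, MemA α U (g j))
    (hv : Summable fun j => aNorm α U (g j)) :
    aNorm α U (fun z => ∑' j, g j z) ≤ 2 * ∑' j, aNorm α U (g j) := by
  have h0 : 0 ≤ ∑' j, aNorm α U (g j) := tsum_nonneg fun j => aNorm_nonneg α U (g j)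
  rw [two_mul]
  exact aNorm_le_of_bounds h0 h0 (fun z hz => norm_tsum_le_of_summable_aNorm hUb hg hv hz)
    (fun z hz w hw => norm_tsum_sub_tsum_le_of_summable_aNorm hUb hg hv hz hw)

theorem MemA.tsum (hUo : IsOpen U) (hUb : Bornology.IsBounded U) (hg : ∀ j, MemA α U (g j))
    (hv : Summable fun j => aNorm α U (g j)) :
    MemA α U fun z => ∑' j, g j z := by
  refine ⟨Complex.differentiableOn_tsum_of_summable_norm hv (fun j => (hg j).1) hUo
      fun j w hw => norm_le_aNorm hUb (hg j) (subset_closure hw),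
    continuousOn_tsum (fun j => (hg j).2.1) hv fun j z hz => norm_le_aNorm hUb (hg j) hz,
    ⟨_, fun z hz w hw => norm_tsum_sub_tsum_le_of_summable_aNorm hUb hg hv hz hw⟩,
    fun ε hε => ?_⟩
  obtain ⟨K, hK⟩ := ((tendsto_sum_nat_add fun j => aNorm α U (g j)).eventually
    (gt_mem_nhds (half_pos hε))).exists
  obtain ⟨δ, hδ, hpartial⟩ :=
    (MemA.finsetSum (s := Finset.range K) fun j _ => hg j).2.2.2 (ε / 2) (half_pos hε)
  refine ⟨δ, hδ, fun z hz w hw hzw => ?_⟩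
  have htail := norm_tsum_sub_tsum_le_of_summable_aNorm hUb (fun j => hg (j + K))
    ((summable_nat_add_iff K).2 hv) hz hw
  dsimp only
  rw [← (summable_of_summable_aNorm hUb hg hv hz).sum_add_tsum_nat_add K,
    ← (summable_of_summable_aNorm hUb hg hv hw).sum_add_tsum_nat_add K, add_sub_add_comm,
    ← add_halves ε, add_mul]
  refine (norm_add_le _ _).trans (add_le_add ?_ (htail.trans ?_))
  · simpa only [Finset.sum_apply] using hpartial z hz w hw hzw
  · gcongr

end Series

def aSubmodule (α : ℝ) (U : Set ℂ) : Submodule ℂ (ℂ → ℂ) where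
  carrier := {f | MemA α U f ∧ Set.EqOn f 0 (closure U)ᶜ}
  add_mem' hf hg := ⟨hf.1.add hg.1, fun z hz => by simp [hf.2 hz, hg.2 hz]⟩
  zero_mem' := ⟨MemA.zero, fun _ _ => rfl⟩
  smul_mem' c _ hf := ⟨hf.1.const_smul c, fun z hz => by simp [hf.2 hz]⟩

theorem MemA.indicator_mem_aSubmodule {α : ℝ} {U : Set ℂ} {f : ℂ → ℂ} (hf : MemA α U f) :
    (closure U).indicator f ∈ aSubmodule α U :=
  ⟨hf.congr fun _ hz => (Set.indicator_of_mem hz f).symm,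
    fun _ hz => Set.indicator_of_notMem hz f⟩

/-- `A_α(U)` realised as a Banach space: an element of `MemA α U` is determined by its values on
`closure U`, so we normalise it to vanish off `closure U`, which makes `aNorm` a norm. The type
synonym keeps the pointwise topology of `ℂ → ℂ` away from the norm topology. -/
def aSpace (α : ℝ) (U : Set ℂ) : Type := aSubmodule α U

namespace aSpace

variable {α : ℝ} {U : Set ℂ}

instance : AddCommGroup (aSpace α U) := inferInstanceAs (AddCommGroup (aSubmodule α U))

instance : Module ℂ (aSpace α U) := inferInstanceAs (Module ℂ (aSubmodule α U))

def toFunₗ : aSpace α U →ₗ[ℂ] ℂ → ℂ := (aSubmodule α U).subtype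

instance : CoeFun (aSpace α U) fun _ => ℂ → ℂ := ⟨fun f => toFunₗ f⟩

def mk (f : ℂ → ℂ) (hf : f ∈ aSubmodule α U) : aSpace α U := ⟨f, hf⟩

@[simp]
theorem coe_mk (f : ℂ → ℂ) (hf : f ∈ aSubmodule α U) : (mk f hf : ℂ → ℂ) = f := rfl

theorem memA (f : aSpace α U) : MemA α U f := (Subtype.property f).1

theorem eqOn_compl_closure (f : aSpace α U) : Set.EqOn f 0 (closure U)ᶜ :=
  (Subtype.property f).2

variable [Fact (Bornology.IsBounded U)]

noncomputable instance : NormedAddCommGroup (aSpace α U) :=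
  AddGroupNorm.toNormedAddCommGroup
    { toFun := fun f => aNorm α U f
      map_zero' := aNorm_zero
      add_le' := fun f g => aNorm_add_le Fact.out (memA f) (memA g)
      neg' := fun f => aNorm_neg (f : ℂ → ℂ)
      eq_zero_of_map_eq_zero' := fun f hf => Subtype.ext <| funext fun z => by
        by_cases hz : z ∈ closure U
        · exact eqOn_zero_of_aNorm_eq_zero Fact.out (memA f) hf hz
        · exact eqOn_compl_closure f hz }

theorem norm_def (f : aSpace α U) : ‖f‖ = aNorm α U f := rfl

noncomputable instance : NormedSpace ℂ (aSpace α U) where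
  norm_smul_le c f := aNorm_smul_le Fact.out c (memA f)

instance [Fact (IsOpen U)] : CompleteSpace (aSpace α U) := by
  refine NormedAddCommGroup.completeSpace_of_summable_imp_tendsto fun u hu => ?_
  have hg : ∀ j, MemA α U (u j) := fun j => memA (u j)
  have hS : (fun z => ∑' j, u j z) ∈ aSubmodule α U :=
    ⟨MemA.tsum Fact.out Fact.out hg hu, fun z hz => by simp [eqOn_compl_closure _ hz]⟩
  have htail_sum : Tendsto (fun n => 2 * ∑' j, ‖u (j + n)‖) atTop (𝓝 0) := by
    simpa using (tendsto_sum_nat_add fun j => ‖u j‖).const_mul 2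
  refine ⟨mk _ hS, tendsto_iff_norm_sub_tendsto_zero.2 <|
    squeeze_zero (fun _ => norm_nonneg _) (fun n => ?_) htail_sum⟩
  have htail : Set.EqOn (fun z => ∑' j, u (j + n) z)
      (mk _ hS - ∑ i ∈ Finset.range n, u i : aSpace α U) (closure U) := fun z hz => by
    simp only [map_sub, map_sum, coe_mk, Pi.sub_apply, Finset.sum_apply,
      ← (summable_of_summable_aNorm Fact.out hg hu hz).sum_add_tsum_nat_add n, add_sub_cancel_left]
  rw [norm_sub_rev, norm_def, ← aNorm_congr htail]
  exact aNorm_tsum_le Fact.out (fun j => hg (j + n)) ((summable_nat_add_iff n).2 hu)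

noncomputable def evalCLM (z : ℂ) (hz : z ∈ closure U) : aSpace α U →L[ℂ] ℂ :=
  ((LinearMap.proj z).comp toFunₗ).mkContinuous 1
    fun f => (one_mul ‖f‖).symm ▸ norm_le_aNorm Fact.out (memA f) hz

end aSpace

noncomputable def diffQuot (a : ℕ → ℂ) (b : ℂ) (f : ℂ → ℂ) (n : ℕ) : ℂ :=
  (f (a n) - f b) / (a n - b)

theorem exists_norm_diffQuot_le_mul_aNorm {α : ℝ} {U : Set ℂ} (hUo : IsOpen U)
    (hUb : Bornology.IsBounded U) {a : ℕ → ℂ} {b : ℂ} (haU : ∀ n, a n ∈ closure U)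
    (hbU : b ∈ closure U) (hbdd : ∀ f, MemA α U f → ∃ M, ∀ n, ‖diffQuot a b f n‖ ≤ M) :
    ∃ C, ∀ f, MemA α U f → ∀ n, ‖diffQuot a b f n‖ ≤ C * aNorm α U f := by
  have : Fact (IsOpen U) := ⟨hUo⟩
  have : Fact (Bornology.IsBounded U) := ⟨hUb⟩
  let q : ℕ → aSpace α U →L[ℂ] ℂ := fun n =>
    (a n - b)⁻¹ • (aSpace.evalCLM (a n) (haU n) - aSpace.evalCLM b hbU)
  have hq : ∀ n f, q n f = diffQuot a b f n := fun n f => (div_eq_inv_mul _ _).symm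
  obtain ⟨C, hC⟩ := banach_steinhaus fun f : aSpace α U =>
    (hbdd f (aSpace.memA f)).imp fun M hM n => hq n f ▸ hM n
  refine ⟨C, fun f hf n => ?_⟩
  let f' := aSpace.mk _ hf.indicator_mem_aSubmodule
  have hf' : Set.EqOn f' f (closure U) := fun z hz => Set.indicator_of_mem hz f
  calc ‖diffQuot a b f n‖ = ‖q n f'‖ := by rw [hq, diffQuot, diffQuot, hf' (haU n), hf' hbU]
    _ ≤ ‖q n‖ * ‖f'‖ := (q n).le_opNorm f'
    _ ≤ C * aNorm α U f := by
      rw [aSpace.norm_def, aNorm_congr hf']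
      exact mul_le_mul_of_nonneg_right (hC n) (aNorm_nonneg α U f)

section DiffQuot

variable {a : ℕ → ℂ} {b : ℂ}

theorem diffQuot_add (f g : ℂ → ℂ) : diffQuot a b (f + g) = diffQuot a b f + diffQuot a b g :=
  funext fun n => by simp only [diffQuot, Pi.add_apply]; ring

theorem diffQuot_smul (c : ℂ) (f : ℂ → ℂ) : diffQuot a b (c • f) = c • diffQuot a b f :=
  funext fun n => by simp only [diffQuot, Pi.smul_apply, smul_eq_mul]; ring

theorem diffQuot_mul (hne : ∀ n, a n ≠ b) (f g : ℂ → ℂ) :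
    diffQuot a b (f * g) = fun n => f (a n) * diffQuot a b g n + g b * diffQuot a b f n :=
  funext fun n => by
    have := sub_ne_zero.2 (hne n)
    simp only [diffQuot, Pi.mul_apply]
    field_simp
    ring

theorem diffQuot_id (hne : ∀ n, a n ≠ b) : diffQuot a b id = fun _ => 1 :=
  funext fun n => div_self (sub_ne_zero.2 (hne n))

end DiffQuot

theorem tendsto_limUnder_of_mem_isCompact {X ι : Type*} [TopologicalSpace X] [Nonempty X]
    {Φ : Ultrafilter ι} {u : ι → X} {K : Set X} (hK : IsCompact K) (hu : ∀ i, u i ∈ K) :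
    Tendsto u Φ (𝓝 (limUnder (Φ : Filter ι) u)) := by
  obtain ⟨x, -, hx⟩ := hK.ultrafilter_le_nhds (Φ.map u)
    (le_principal_iff.2 (mem_map.2 (univ_mem' hu)))
  exact tendsto_nhds_limUnder ⟨x, hx⟩

theorem isBoundedPointDerivation_limUnder_diffQuot {α : ℝ} {U : Set ℂ} {a : ℕ → ℂ} {b : ℂ}
    (Φ : Ultrafilter ℕ) (hΦ : (Φ : Filter ℕ) ≤ atTop) (haU : ∀ n, a n ∈ closure U)
    (hab : Tendsto a atTop (𝓝 b)) (hne : ∀ n, a n ≠ b) {C : ℝ}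
    (hC : ∀ f, MemA α U f → ∀ n, ‖diffQuot a b f n‖ ≤ C * aNorm α U f) :
    IsBoundedPointDerivation α U b fun f => limUnder (Φ : Filter ℕ) (diffQuot a b f) := by
  have hD : ∀ f, MemA α U f →
      Tendsto (diffQuot a b f) Φ (𝓝 (limUnder (Φ : Filter ℕ) (diffQuot a b f))) :=
    fun f hf => tendsto_limUnder_of_mem_isCompact (isCompact_closedBall 0 _)
      fun n => mem_closedBall_zero_iff.2 (hC f hf n)
  have hbU : b ∈ closure U := isClosed_closure.mem_of_tendsto hab (Eventually.of_forall haU)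
  refine ⟨fun f g hf hg => ?_, fun c f hf => ?_, ⟨max C 1, by positivity, fun f hf => ?_⟩,
    fun f g hf hg => ?_⟩ <;> dsimp only
  · rw [diffQuot_add]
    exact ((hD f hf).add (hD g hg)).limUnder_eq
  · rw [diffQuot_smul]
    exact ((hD f hf).const_smul c).limUnder_eq
  · calc _ ≤ C * aNorm α U f := le_of_tendsto (hD f hf).norm (Eventually.of_forall (hC f hf))
      _ ≤ max C 1 * aNorm α U f := by gcongr; exacts [aNorm_nonneg α U f, le_max_left C 1]
  · have hfa : Tendsto (fun n => f (a n)) Φ (𝓝 (f b)) :=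
      (hf.2.1 b hbU).tendsto.comp (tendsto_nhdsWithin_iff.2
        ⟨hab.mono_left hΦ, Eventually.of_forall haU⟩)
    rw [diffQuot_mul hne]
    exact ((hfa.mul (hD g hg)).add (tendsto_const_nhds.mul (hD f hf))).limUnder_eq

theorem bounded_quotients_give_derivation_general (α : ℝ) (hα1 : α < 1)
    (U : Set ℂ) (hUo : IsOpen U) (hUb : Bornology.IsBounded U)
    (b : ℂ) (hb : b ∈ frontier U)
    (a : ℕ → ℂ) (haU : ∀ n, a n ∈ U) (hab : Tendsto a atTop (nhds b))
    (hbdd : ∀ f : ℂ → ℂ, MemA α U f →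
      ∃ M : ℝ, ∀ n, ‖(f (a n) - f b) / (a n - b)‖ ≤ M) :
    ∃ D : (ℂ → ℂ) → ℂ, IsBoundedPointDerivation α U b D ∧
      ∃ f : ℂ → ℂ, MemA α U f ∧ D f ≠ 0 := by
  have hbU : b ∉ U := (hUo.frontier_eq ▸ hb).2
  have hne : ∀ n, a n ≠ b := fun n h => hbU (h ▸ haU n)
  have haU' : ∀ n, a n ∈ closure U := fun n => subset_closure (haU n)
  obtain ⟨C, hC⟩ := exists_norm_diffQuot_le_mul_aNorm hUo hUb haU'
    (frontier_subset_closure hb) hbdd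
  let Φ := Ultrafilter.of (atTop : Filter ℕ)
  refine ⟨_, isBoundedPointDerivation_limUnder_diffQuot Φ (Ultrafilter.of_le _) haU' hab hne hC,
    id, memA_id hα1 hUb, ?_⟩
  rw [diffQuot_id hne, tendsto_const_nhds.limUnder_eq]
  exact one_ne_zero

/-- if there is a sequence aₙ ∈ U, aₙ → b, along which the difference
quotients (f(aₙ)-f(b))/(aₙ-b) are bounded for each f ∈ A_α(U), then A_α(U) admits a
nonzero bounded point derivation at b. -/
theorem bounded_quotients_give_derivation (α : ℝ) (hα0 : 0 < α) (hα1 : α < 1)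
    (U : Set ℂ) (hUo : IsOpen U) (hUb : Bornology.IsBounded U)
    (b : ℂ) (hb : b ∈ frontier U)
    (a : ℕ → ℂ) (haU : ∀ n, a n ∈ U) (hab : Tendsto a atTop (nhds b))
    (hbdd : ∀ f : ℂ → ℂ, MemA α U f →
      ∃ M : ℝ, ∀ n, ‖(f (a n) - f b) / (a n - b)‖ ≤ M) :
    ∃ D : (ℂ → ℂ) → ℂ, IsBoundedPointDerivation α U b D ∧
      ∃ f : ℂ → ℂ, MemA α U f ∧ D f ≠ 0 :=
  bounded_quotients_give_derivation_general α hα1 U hUo hUb b hb a haU hab hbdd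
end
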